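/- arXiv:1409.5010 — 9 statements merged into one kernel-verified Lean document; each statement's English description precedes it below -/
import Mathlib

section
/- If n is odd and v_1, ..., v_n are n pairwise orthogonal vectors in ℤ^n all having the same nonzero Euclidean length l, then l is an integer. -/
/-- If n is odd and v 0, ..., v (n-1) are n pairwise orthogonal vectors in ℤ^n
all having the same nonzero Euclidean length √N, then √N is an integer. -/
theorem stmt_0 (n : ℕ) (hn : Odd n) (v : Fin n → Fin n → ℤ) (N : ℤ)
    (horth : ∀ i j, i ≠ j → ∑ k, v i k * v j k = 0)
    (hnorm : ∀ i, ∑ k, (v i k) ^ 2 = N) (hN : N ≠ 0) :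
    ∃ l : ℤ, l ^ 2 = N := by
  obtain ⟨m, hm⟩ := hn
  set M : Matrix (Fin n) (Fin n) ℤ := Matrix.of v with hM
  have hMM : M * M.transpose = N • (1 : Matrix (Fin n) (Fin n) ℤ) := by
    ext i j
    simp only [Matrix.mul_apply, Matrix.transpose_apply, hM, Matrix.of_apply,
      Matrix.smul_apply, Matrix.one_apply]
    by_cases h : i = j
    · subst h
      rw [← hnorm i]
      simp [sq]
    · simp [h, horth i j h]
  have hdet : (M.det) ^ 2 = N ^ n := by
    have := congrArg Matrix.det hMM
    rw [Matrix.det_mul, Matrix.det_transpose, Matrix.det_smul, Matrix.det_one,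
      mul_one, Fintype.card_fin] at this
    rw [sq]; exact this
  -- N^m ∣ det M
  have hNm : N ^ m ∣ M.det := by
    have h2 : (N ^ m) ^ 2 ∣ (M.det) ^ 2 := by
      rw [hdet, ← pow_mul, hm]
      exact ⟨N, by ring⟩
    exact (Int.pow_dvd_pow_iff (two_ne_zero)).mp h2
  obtain ⟨c, hc⟩ := hNm
  refine ⟨c, ?_⟩
  have hcancel : (N ^ m) ^ 2 * c ^ 2 = (N ^ m) ^ 2 * N := by
    rw [← mul_pow, ← hc, hdet, hm]; ring
  have hNm0 : ((N ^ m) ^ 2 : ℤ) ≠ 0 := pow_ne_zero _ (pow_ne_zero _ hN)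
  exact mul_left_cancel₀ hNm0 hcancel
end

section
/- Let v, w be nonzero vectors in ℤ^3 with |v| an integer and (v,w) = 0. Then for any prime p with p ≡ 3 (mod 4), the p-adic valuation v_p(|w|²) is even. -/
/-- If v, w ∈ ℤ³ are nonzero, |v| ∈ ℤ and (v,w) = 0, then for any prime
p ≡ 3 mod 4 the p-adic valuation of |w|² is even. -/
theorem stmt_1 (v w : Fin 3 → ℤ) (hv : v ≠ 0) (hw : w ≠ 0)
    (hlen : ∃ l : ℤ, l ^ 2 = ∑ i, (v i) ^ 2)
    (horth : ∑ i, v i * w i = 0)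
    (p : ℕ) (hp : p.Prime) (hp4 : p % 4 = 3) :
    Even (padicValInt p (∑ i, (w i) ^ 2)) := by
  haveI : Fact p.Prime := ⟨hp⟩
  obtain ⟨l, hl⟩ := hlen
  rw [Fin.sum_univ_three] at hl horth ⊢
  set N : ℤ := w 0 ^ 2 + w 1 ^ 2 + w 2 ^ 2 with hNdef
  -- N > 0
  have hwc : w 0 ≠ 0 ∨ w 1 ≠ 0 ∨ w 2 ≠ 0 := by
    by_contra hcon
    push_neg at hcon
    exact hw (funext fun i => by fin_cases i <;> simp [hcon.1, hcon.2.1, hcon.2.2])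
  have hN : 0 < N := by
    rcases hwc with h | h | h <;>
      nlinarith [sq_nonneg (w 0), sq_nonneg (w 1), sq_nonneg (w 2), sq_pos_of_ne_zero h]
  -- l ≠ 0
  have hvc : v 0 ≠ 0 ∨ v 1 ≠ 0 ∨ v 2 ≠ 0 := by
    by_contra hcon
    push_neg at hcon
    exact hv (funext fun i => by fin_cases i <;> simp [hcon.1, hcon.2.1, hcon.2.2])
  have hl0 : l ≠ 0 := by
    intro h
    subst h
    rcases hvc with hcc | hcc | hcc <;>
      nlinarith [sq_nonneg (v 0), sq_nonneg (v 1), sq_nonneg (v 2), sq_pos_of_ne_zero hcc]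
  -- main construction : k² N = a² + b²
  have main : ∃ k a b : ℤ, k ≠ 0 ∧ k ^ 2 * N = a ^ 2 + b ^ 2 := by
    by_cases hD : (2 * l ^ 2 - 2 * l * v 0) = 0
    · -- then v = (l, 0, 0) and w 0 = 0
      have h2l : (2 * l) * l = (2 * l) * v 0 := by linarith
      have hv0 : l = v 0 := mul_left_cancel₀ (by simpa using hl0) h2l
      have hv1 : v 1 = 0 := by nlinarith [sq_nonneg (v 1), sq_nonneg (v 2)]
      have hv2 : v 2 = 0 := by nlinarith [sq_nonneg (v 1), sq_nonneg (v 2)]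
      have hw0 : w 0 = 0 := by
        have hz : v 0 * w 0 = 0 := by rw [hv1, hv2] at horth; linarith
        rcases mul_eq_zero.mp hz with h | h
        · exact absurd h (hv0 ▸ hl0)
        · exact h
      exact ⟨1, w 1, w 2, one_ne_zero, by rw [hNdef, hw0]; ring⟩
    · refine ⟨2 * l ^ 2 - 2 * l * v 0,
        (2 * l ^ 2 - 2 * l * v 0) * w 1 + 2 * l * w 0 * v 1,
        (2 * l ^ 2 - 2 * l * v 0) * w 2 + 2 * l * w 0 * v 2, hD, ?_⟩
      rw [hNdef]
      linear_combination (4 * l ^ 2 * (w 0) ^ 2) * hl -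
        (4 * l * (2 * l ^ 2 - 2 * l * v 0) * (w 0)) * horth
  obtain ⟨k, a, b, hk, hkey⟩ := main
  have hcast : ((k ^ 2 * N).natAbs : ℤ) = ((a.natAbs : ℤ)) ^ 2 + ((b.natAbs : ℤ)) ^ 2 := by
    rw [Int.natAbs_of_nonneg (by positivity), hkey]
    simp [sq_abs, ← Int.abs_eq_natAbs]
  have h1 : (k ^ 2 * N).natAbs = a.natAbs ^ 2 + b.natAbs ^ 2 := by exact_mod_cast hcast
  have heven : Even (padicValNat p ((k ^ 2 * N).natAbs)) :=
    by
      by_cases hmem : p ∈ ((k ^ 2 * N).natAbs).primeFactors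
      · exact Nat.eq_sq_add_sq_iff.mp ⟨a.natAbs, b.natAbs, h1⟩ p hmem hp4
      · have hnd : ¬ p ∣ (k ^ 2 * N).natAbs := fun hd => hmem (Nat.mem_primeFactors.mpr
          ⟨hp, hd, Int.natAbs_ne_zero.mpr (mul_ne_zero (pow_ne_zero _ hk) hN.ne')⟩)
        rw [padicValNat.eq_zero_of_not_dvd hnd]
        exact Even.zero
  have habs : (k ^ 2 * N).natAbs = k.natAbs ^ 2 * N.natAbs := by
    rw [Int.natAbs_mul, Int.natAbs_pow]
  rw [habs, padicValNat.mul (pow_ne_zero _ (Int.natAbs_ne_zero.mpr hk))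
      (Int.natAbs_ne_zero.mpr hN.ne'),
    padicValNat.pow _ _] at heven
  exact (Nat.even_add.mp heven).mp (even_two_mul _)
end

section
/- If integers a, b, c, l satisfy ac − b² = l² and there exist integers x, y with ax² + 2bxy + cy² = l² and l ≠ 0, then a is a sum of two integer squares (in particular a ≥ 0). -/
/-- If ac − b² = l², l ≠ 0, and ax² + 2bxy + cy² = l² has an integer
solution, then a is a sum of two integer squares. -/
theorem stmt_3 (a b c l : ℤ) (h : a * c - b ^ 2 = l ^ 2) (hl : l ≠ 0)
    (hrep : ∃ x y : ℤ, a * x ^ 2 + 2 * b * x * y + c * y ^ 2 = l ^ 2) :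
    ∃ u y : ℤ, u ^ 2 + y ^ 2 = a := by
  obtain ⟨x, y, hxy⟩ := hrep
  have key : (a * x + b * y) ^ 2 + l ^ 2 * y ^ 2 = a * l ^ 2 := by
    have : (a * x + b * y) ^ 2 + (a * c - b ^ 2) * y ^ 2
        = a * (a * x ^ 2 + 2 * b * x * y + c * y ^ 2) := by ring
    rw [h] at this
    rw [this, hxy]
  have hdvd : l ∣ a * x + b * y := by
    have h2 : l ^ 2 ∣ (a * x + b * y) ^ 2 := ⟨a - y ^ 2, by linarith [key]⟩
    exact (Int.pow_dvd_pow_iff two_ne_zero).mp h2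
  obtain ⟨u, hu⟩ := hdvd
  refine ⟨u, y, ?_⟩
  have hl2 : l ^ 2 ≠ 0 := pow_ne_zero _ hl
  have : l ^ 2 * (u ^ 2 + y ^ 2) = l ^ 2 * a := by
    rw [hu] at key; linear_combination key
  exact mul_left_cancel₀ hl2 this
end

section
/- A nonzero vector v ∈ ℤ^3 can be extended to three pairwise orthogonal integer vectors all of the same length |v| if and only if |v| is an integer. -/
open Zsqrtd
local notation "ℤ[i]" => GaussianInt

lemma my_norm_mk (x y : ℤ) : Zsqrtd.norm (⟨x, y⟩ : ℤ[i]) = x ^ 2 + y ^ 2 := by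
  simp [Zsqrtd.norm]; ring

lemma prime_of_norm_prime {z : ℤ[i]} (h : Prime (Zsqrtd.norm z)) : Prime z := by
  have hirr : Irreducible z := by
    constructor
    · exact fun hu => h.not_unit (Int.isUnit_iff_natAbs_eq.2 (Zsqrtd.norm_eq_one_iff.2 hu))
    · intro x y hxy
      have h2 : Zsqrtd.norm x * Zsqrtd.norm y = Zsqrtd.norm z := by rw [hxy, Zsqrtd.norm_mul]
      rcases h.irreducible.isUnit_or_isUnit h2.symm with h' | h'
      · exact Or.inl (Zsqrtd.norm_eq_one_iff.1 (Int.isUnit_iff_natAbs_eq.1 h'))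
      · exact Or.inr (Zsqrtd.norm_eq_one_iff.1 (Int.isUnit_iff_natAbs_eq.1 h'))
  exact hirr.prime

lemma dvd_both_of_dvd_sq_add_sq {p : ℕ} (hp : p.Prime) (h3 : p % 4 = 3) {a b : ℤ}
    (h : (p : ℤ) ∣ a ^ 2 + b ^ 2) : (p : ℤ) ∣ a ∧ (p : ℤ) ∣ b := by
  haveI : Fact p.Prime := ⟨hp⟩
  have hpi : Prime ((p : ℤ) : ℤ[i]) := by
    have := (GaussianInt.prime_iff_mod_four_eq_three_of_nat_prime p).2 h3
    exact_mod_cast this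
  have hw : ((p : ℤ) : ℤ[i]) ∣ (⟨a, b⟩ : ℤ[i]) * star ⟨a, b⟩ := by
    rw [← Zsqrtd.norm_eq_mul_conj, my_norm_mk]
    exact_mod_cast (Zsqrtd.intCast_dvd_intCast (d := -1) _ _).2 h
  rcases hpi.2.2 _ _ hw with h' | h'
  · have := (Zsqrtd.intCast_dvd _ _).1 h'
    exact this
  · have := (Zsqrtd.intCast_dvd _ _).1 h'
    exact ⟨this.1, (dvd_neg.1 this.2)⟩

lemma exists_dvd_norm : ∀ (r : ℕ) (w : ℤ[i]) (s : ℕ),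
    (r * s : ℤ) = Zsqrtd.norm w →
    (∀ p : ℕ, p.Prime → p % 4 = 3 → p ∣ r → p ∣ s → False) →
    ∃ u : ℤ[i], u ∣ w ∧ Zsqrtd.norm u = r := by
  intro r
  induction r using Nat.strong_induction_on with
  | _ r ih =>
  intro w s hn hcond
  rcases Nat.eq_zero_or_pos r with rfl | hr0
  · have hw0 : w = 0 := by
      have : Zsqrtd.norm w = 0 := by push_cast at hn; omega
      exact GaussianInt.norm_eq_zero.1 this
    exact ⟨0, by simp [hw0], by simp [Zsqrtd.norm]⟩
  rcases eq_or_lt_of_le (show 1 ≤ r from hr0) with hr1 | hr2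
  · exact ⟨1, one_dvd _, by simp [Zsqrtd.norm, ← hr1]⟩
  · -- r ≥ 2
    set p := r.minFac with hpdef
    have hp : p.Prime := Nat.minFac_prime (by omega)
    have hpr : p ∣ r := Nat.minFac_dvd r
    haveI : Fact p.Prime := ⟨hp⟩
    by_cases h3 : p % 4 = 3
    · -- inert case
      have hps : ¬ p ∣ s := fun hds => hcond p hp h3 hpr hds
      have hpi : Prime ((p : ℤ) : ℤ[i]) := by
        have := (GaussianInt.prime_iff_mod_four_eq_three_of_nat_prime p).2 h3
        exact_mod_cast this
      have hpw : ((p : ℤ) : ℤ[i]) ∣ w := by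
        have hdvd : ((p : ℤ) : ℤ[i]) ∣ w * star w := by
          rw [← Zsqrtd.norm_eq_mul_conj, ← hn]
          have : (p : ℤ) ∣ (r * s : ℤ) := by exact_mod_cast Dvd.dvd.natCast (hpr.mul_right s)
          exact_mod_cast (Zsqrtd.intCast_dvd_intCast (d := -1) _ _).2 this
        rcases hpi.2.2 _ _ hdvd with h' | h'
        · exact h'
        · have h2 := (Zsqrtd.intCast_dvd _ _).1 h'
          exact (Zsqrtd.intCast_dvd _ _).2 ⟨h2.1, (dvd_neg.1 h2.2)⟩
      obtain ⟨w', rfl⟩ := hpw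
      obtain ⟨r', hr'⟩ := hpr
      have hnw' : ((r' : ℤ) * s) = (p : ℤ) * Zsqrtd.norm w' := by
        have h4 : Zsqrtd.norm (((p:ℤ) : ℤ[i]) * w') = (p:ℤ)^2 * Zsqrtd.norm w' := by
          rw [Zsqrtd.norm_mul, Zsqrtd.norm_intCast]; ring
        rw [h4] at hn
        have hp0 : (p : ℤ) ≠ 0 := by exact_mod_cast hp.ne_zero
        have : (p:ℤ) * ((r':ℤ) * s) = (p:ℤ) * ((p:ℤ) * Zsqrtd.norm w') := by
          push_cast [hr'] at hn ⊢; linarith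
        exact mul_left_cancel₀ hp0 this
      have hpr' : p ∣ r' := by
        have : (p : ℤ) ∣ (r' : ℤ) * s := ⟨Zsqrtd.norm w', hnw'⟩
        have := (Int.Prime.dvd_mul' (by exact_mod_cast hp) this)
        rcases this with h' | h'
        · exact_mod_cast Int.ofNat_dvd.1 (by exact_mod_cast h')
        · exact absurd (by exact_mod_cast Int.ofNat_dvd.1 (by exact_mod_cast h')) hps
      obtain ⟨r'', rfl⟩ := hpr'
      have hrec : ((r'' : ℤ) * s) = Zsqrtd.norm w' := by
        have hp0 : (p : ℤ) ≠ 0 := by exact_mod_cast hp.ne_zero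
        have : (p:ℤ) * ((r'':ℤ) * s) = (p:ℤ) * Zsqrtd.norm w' := by
          push_cast at hnw' ⊢; linarith
        exact mul_left_cancel₀ hp0 this
      have hr''pos : 0 < r'' := by
        rcases Nat.eq_zero_or_pos r'' with rfl | h
        · omega
        · exact h
      have hlt : r'' < r := by
        have hp2 : 2 ≤ p := hp.two_le
        have h4 : 2 * (2 * r'') ≤ p * (p * r'') :=
          Nat.mul_le_mul hp2 (Nat.mul_le_mul hp2 le_rfl)
        omega
      have hcond' : ∀ q : ℕ, q.Prime → q % 4 = 3 → q ∣ r'' → q ∣ s → False := by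
        intro q hq hq3 hqr hqs
        exact hcond q hq hq3 (by rw [hr']; exact (hqr.mul_left p).mul_left p) hqs
      obtain ⟨u', hu'dvd, hu'norm⟩ := ih r'' hlt w' s hrec hcond'
      refine ⟨((p:ℤ) : ℤ[i]) * u', mul_dvd_mul_left _ hu'dvd, ?_⟩
      rw [Zsqrtd.norm_mul, Zsqrtd.norm_intCast, hu'norm, hr']
      push_cast
      ring
    · -- split/ramified case
      obtain ⟨x, y, hxy⟩ := Nat.Prime.sq_add_sq h3
      have hπn : Zsqrtd.norm (⟨(x:ℤ), (y:ℤ)⟩ : ℤ[i]) = (p : ℤ) := by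
        rw [my_norm_mk]; exact_mod_cast hxy
      have hπ : Prime (⟨(x:ℤ), (y:ℤ)⟩ : ℤ[i]) :=
        prime_of_norm_prime (by rw [hπn]; exact Nat.prime_iff_prime_int.mp hp)
      have hπw : (⟨(x:ℤ), (y:ℤ)⟩ : ℤ[i]) ∣ w * star w := by
        rw [← Zsqrtd.norm_eq_mul_conj, ← hn]
        have h1 : (⟨(x:ℤ), (y:ℤ)⟩ : ℤ[i]) ∣ (((p:ℤ) : ℤ[i])) := by
          refine ⟨star ⟨(x:ℤ), (y:ℤ)⟩, ?_⟩
          rw [← Zsqrtd.norm_eq_mul_conj, hπn]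
        refine h1.trans ?_
        have : (p : ℤ) ∣ (r * s : ℤ) := by exact_mod_cast Dvd.dvd.natCast (hpr.mul_right s)
        exact_mod_cast (Zsqrtd.intCast_dvd_intCast (d := -1) _ _).2 this
      have hkey : ∃ π' : ℤ[i], π' ∣ w ∧ Zsqrtd.norm π' = (p : ℤ) := by
        rcases hπ.2.2 _ _ hπw with h' | h'
        · exact ⟨_, h', hπn⟩
        · refine ⟨star ⟨(x:ℤ), (y:ℤ)⟩, ?_, by rw [Zsqrtd.norm_conj, hπn]⟩
          obtain ⟨t, ht⟩ := h'
          exact ⟨star t, by rw [← star_star w, ht, star_mul']⟩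
      obtain ⟨π', ⟨w', rfl⟩, hπ'n⟩ := hkey
      obtain ⟨r', hr'⟩ := hpr
      have hp0 : (p : ℤ) ≠ 0 := by exact_mod_cast hp.ne_zero
      have hrec : ((r' : ℤ) * s) = Zsqrtd.norm w' := by
        rw [Zsqrtd.norm_mul, hπ'n] at hn
        have : (p:ℤ) * ((r':ℤ) * s) = (p:ℤ) * Zsqrtd.norm w' := by
          push_cast [hr'] at hn ⊢; linarith
        exact mul_left_cancel₀ hp0 this
      have hr'pos : 0 < r' := by
        rcases Nat.eq_zero_or_pos r' with rfl | h
        · omega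
        · exact h
      have hlt : r' < r := by
        have hp2 : 2 ≤ p := hp.two_le
        have h4 : 2 * r' ≤ p * r' := Nat.mul_le_mul hp2 le_rfl
        omega
      have hcond' : ∀ q : ℕ, q.Prime → q % 4 = 3 → q ∣ r' → q ∣ s → False := by
        intro q hq hq3 hqr hqs
        exact hcond q hq hq3 (by rw [hr']; exact hqr.mul_left p) hqs
      obtain ⟨u', hu'dvd, hu'norm⟩ := ih r' hlt w' s hrec hcond'
      refine ⟨π' * u', mul_dvd_mul_left _ hu'dvd, ?_⟩
      rw [Zsqrtd.norm_mul, hπ'n, hu'norm, hr']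
      push_cast
      ring

lemma sq4_odd {x : ℤ} (h : Odd x) : x ^ 2 % 4 = 1 := by
  obtain ⟨k, hk⟩ := h
  have h2 : x ^ 2 = 1 + 4 * (k * k + k) := by rw [hk]; ring
  rw [h2, Int.add_mul_emod_self_left]; decide

lemma sq4_even {x : ℤ} (h : Even x) : x ^ 2 % 4 = 0 := by
  obtain ⟨k, hk⟩ := h
  have h2 : x ^ 2 = 0 + 4 * (k * k) := by rw [hk]; ring
  rw [h2, Int.add_mul_emod_self_left]; decide

lemma sq4 (x : ℤ) : x ^ 2 % 4 = 0 ∨ x ^ 2 % 4 = 1 := by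
  rcases Int.even_or_odd x with h | h
  · exact Or.inl (sq4_even h)
  · exact Or.inr (sq4_odd h)

lemma not_two_odd {a b c d : ℤ} (ha : Odd a) (hb : Odd b)
    (h : a ^ 2 + b ^ 2 + c ^ 2 = d ^ 2) : False := by
  have h1 := sq4_odd ha
  have h2 := sq4_odd hb
  have h3 := sq4 c
  have h4 := sq4 d
  have h5 : (a ^ 2 + b ^ 2 + c ^ 2) % 4 = d ^ 2 % 4 := by rw [h]
  rw [Int.add_emod, Int.add_emod (a ^ 2) (b ^ 2), h1, h2] at h5
  rcases h3 with h3 | h3 <;> rcases h4 with h4 | h4 <;> rw [h3, h4] at h5 <;> norm_num at h5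

lemma sum_sq_pos {a b c : ℤ} (h : ¬(a = 0 ∧ b = 0 ∧ c = 0)) : 0 < a ^ 2 + b ^ 2 + c ^ 2 := by
  by_contra h'
  push_neg at h'
  have ha : a = 0 := by nlinarith [sq_nonneg a, sq_nonneg b, sq_nonneg c]
  have hb : b = 0 := by nlinarith [sq_nonneg a, sq_nonneg b, sq_nonneg c]
  have hc : c = 0 := by nlinarith [sq_nonneg a, sq_nonneg b, sq_nonneg c]
  exact h ⟨ha, hb, hc⟩

def Good (a b c : ℤ) : Prop :=
  ∃ a₂ b₂ c₂ a₃ b₃ c₃ : ℤ,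
    a * a₂ + b * b₂ + c * c₂ = 0 ∧ a * a₃ + b * b₃ + c * c₃ = 0 ∧
    a₂ * a₃ + b₂ * b₃ + c₂ * c₃ = 0 ∧
    a₂ ^ 2 + b₂ ^ 2 + c₂ ^ 2 = a ^ 2 + b ^ 2 + c ^ 2 ∧
    a₃ ^ 2 + b₃ ^ 2 + c₃ ^ 2 = a ^ 2 + b ^ 2 + c ^ 2

lemma good_swap12 {a b c : ℤ} (h : Good b a c) : Good a b c := by
  obtain ⟨a₂, b₂, c₂, a₃, b₃, c₃, h1, h2, h3, h4, h5⟩ := h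
  exact ⟨b₂, a₂, c₂, b₃, a₃, c₃, by linarith, by linarith, by linarith, by linarith, by linarith⟩

lemma good_swap13 {a b c : ℤ} (h : Good c b a) : Good a b c := by
  obtain ⟨a₂, b₂, c₂, a₃, b₃, c₃, h1, h2, h3, h4, h5⟩ := h
  exact ⟨c₂, b₂, a₂, c₃, b₃, a₃, by linarith, by linarith, by linarith, by linarith, by linarith⟩

lemma good_swap23 {a b c : ℤ} (h : Good a c b) : Good a b c := by
  obtain ⟨a₂, b₂, c₂, a₃, b₃, c₃, h1, h2, h3, h4, h5⟩ := h
  exact ⟨a₂, c₂, b₂, a₃, c₃, b₃, by linarith, by linarith, by linarith, by linarith, by linarith⟩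

lemma good_construct {a b c m n P q : ℤ}
    (ha : a = 2 * (m * P - n * q)) (hb : b = 2 * (n * P + m * q))
    (hc : c = m ^ 2 + n ^ 2 - P ^ 2 - q ^ 2) : Good a b c := by
  refine ⟨2 * (-(P * q) - m * n), m ^ 2 + P ^ 2 - q ^ 2 - n ^ 2, 2 * (P * n - m * q),
    m ^ 2 - P ^ 2 + q ^ 2 - n ^ 2, 2 * (-(P * q) + m * n), 2 * (-(q * n) - m * P),
    ?_, ?_, ?_, ?_, ?_⟩ <;> subst ha hb hc <;> ring


lemma good_primitive (a b c d : ℤ) (h : a ^ 2 + b ^ 2 + c ^ 2 = d ^ 2) (hd : 0 ≤ d)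
    (hprim : ∀ p : ℕ, p.Prime → (p : ℤ) ∣ a → (p : ℤ) ∣ b → (p : ℤ) ∣ c → False)
    (hae : Even a) (hbe : Even b) : Good a b c := by
  by_cases hab : a = 0 ∧ b = 0
  · obtain ⟨rfl, rfl⟩ := hab
    exact ⟨c, 0, 0, 0, c, 0, by ring, by ring, by ring, by ring, by ring⟩
  obtain ⟨A, hA⟩ := hae
  obtain ⟨B, hB⟩ := hbe
  subst hA hB
  have h2 : Even (d ^ 2 - c ^ 2) := ⟨2 * (A ^ 2 + B ^ 2), by linear_combination -h⟩
  have h3 : Even (d - c) := by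
    rw [Int.even_sub] at h2 ⊢
    simp only [Int.even_pow] at h2
    tauto
  obtain ⟨r, hr⟩ : ∃ r, d - c = 2 * r := by obtain ⟨k, hk⟩ := h3; exact ⟨k, by omega⟩
  set sZ : ℤ := c + r with hsZ
  have key4 : 4 * (A ^ 2 + B ^ 2) = 4 * (r * sZ) := by
    linear_combination h + (d + c + 2 * r) * hr
  have key : A ^ 2 + B ^ 2 = r * sZ := by linarith
  have hABpos : 0 < A ^ 2 + B ^ 2 := by
    have hAB : A ≠ 0 ∨ B ≠ 0 := by
      by_contra hh
      push_neg at hh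
      exact hab ⟨by omega, by omega⟩
    rcases hAB with h' | h'
    · nlinarith [(mul_self_pos (a := A)).2 h', sq_nonneg B]
    · nlinarith [(mul_self_pos (a := B)).2 h', sq_nonneg A]
  have hsum : r + sZ = d := by omega
  have hrpos : 0 < r := by nlinarith
  have hspos : 0 < sZ := by nlinarith
  have hn : ((r.toNat : ℤ) * (sZ.toNat : ℤ)) = Zsqrtd.norm (⟨A, B⟩ : ℤ[i]) := by
    rw [my_norm_mk, Int.toNat_of_nonneg hrpos.le, Int.toNat_of_nonneg hspos.le]
    linarith
  have hcond : ∀ p : ℕ, p.Prime → p % 4 = 3 → p ∣ r.toNat → p ∣ sZ.toNat → False := by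
    intro p hp hp3 hpr hps
    have hr' : (p : ℤ) ∣ r := by
      have := Int.natCast_dvd_natCast.2 hpr
      rwa [Int.toNat_of_nonneg hrpos.le] at this
    have hs' : (p : ℤ) ∣ sZ := by
      have := Int.natCast_dvd_natCast.2 hps
      rwa [Int.toNat_of_nonneg hspos.le] at this
    have hpc : (p : ℤ) ∣ c := by
      have : c = sZ - r := by omega
      rw [this]; exact dvd_sub hs' hr'
    have hpAB : (p : ℤ) ∣ A ^ 2 + B ^ 2 := key ▸ hr'.mul_right sZ
    obtain ⟨hpA, hpB⟩ := dvd_both_of_dvd_sq_add_sq hp hp3 hpAB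
    exact hprim p hp (dvd_add hpA hpA) (dvd_add hpB hpB) hpc
  obtain ⟨u, ⟨t, htw⟩, hun⟩ := exists_dvd_norm r.toNat ⟨A, B⟩ sZ.toNat hn hcond
  have hunr : Zsqrtd.norm u = r := by rw [hun, Int.toNat_of_nonneg hrpos.le]
  have hnt : Zsqrtd.norm t = sZ := by
    have hmul : r * sZ = Zsqrtd.norm u * Zsqrtd.norm t := by
      rw [← Zsqrtd.norm_mul, ← htw, my_norm_mk]; linarith
    rw [hunr] at hmul
    exact (mul_left_cancel₀ (by linarith) hmul).symm
  have h1 := congrArg Zsqrtd.re htw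
  have h2 := congrArg Zsqrtd.im htw
  simp only [Zsqrtd.re_mul, Zsqrtd.im_mul] at h1 h2
  have hmn : t.re ^ 2 + t.im ^ 2 = sZ := by
    rw [← hnt, Zsqrtd.norm_def]; ring
  have hPq : u.re ^ 2 + u.im ^ 2 = r := by
    rw [← hunr, Zsqrtd.norm_def]; ring
  exact good_construct (m := t.re) (n := t.im) (P := u.re) (q := u.im)
    (by linarith [h1]) (by linarith [h2]) (by omega)

lemma good_of_eq_sq : ∀ (N : ℕ) (a b c d : ℤ), (a ^ 2 + b ^ 2 + c ^ 2).toNat = N →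
    a ^ 2 + b ^ 2 + c ^ 2 = d ^ 2 → Good a b c := by
  intro N
  induction N using Nat.strong_induction_on with
  | _ N ih =>
  intro a b c d hN h
  by_cases h0 : a = 0 ∧ b = 0 ∧ c = 0
  · obtain ⟨rfl, rfl, rfl⟩ := h0
    exact ⟨0, 0, 0, 0, 0, 0, by ring, by ring, by ring, by ring, by ring⟩
  by_cases hex : ∃ p : ℕ, p.Prime ∧ (p : ℤ) ∣ a ∧ (p : ℤ) ∣ b ∧ (p : ℤ) ∣ c
  · obtain ⟨p, hp, ⟨a', rfl⟩, ⟨b', rfl⟩, ⟨c', rfl⟩⟩ := hex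
    have hp2 : (2 : ℤ) ≤ (p : ℤ) := by exact_mod_cast hp.two_le
    have hpd : (p : ℤ) ∣ d := by
      have hdvd : ((p : ℤ)) ^ 2 ∣ d ^ 2 := ⟨a' ^ 2 + b' ^ 2 + c' ^ 2, by linear_combination -h⟩
      exact (Int.pow_dvd_pow_iff two_ne_zero).1 hdvd
    obtain ⟨d', rfl⟩ := hpd
    have hp0 : ((p : ℤ)) ^ 2 ≠ 0 := by positivity
    have h' : a' ^ 2 + b' ^ 2 + c' ^ 2 = d' ^ 2 := by
      have hh : ((p:ℤ))^2 * (a' ^ 2 + b' ^ 2 + c' ^ 2) = ((p:ℤ))^2 * d' ^ 2 := by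
        linear_combination h
      exact mul_left_cancel₀ hp0 hh
    have h0' : ¬(a' = 0 ∧ b' = 0 ∧ c' = 0) := by
      rintro ⟨rfl, rfl, rfl⟩
      exact h0 ⟨by ring, by ring, by ring⟩
    have hS'pos : 0 < a' ^ 2 + b' ^ 2 + c' ^ 2 := sum_sq_pos h0'
    have hlt : (a' ^ 2 + b' ^ 2 + c' ^ 2).toNat < N := by
      rw [← hN]
      have hSS : ((p:ℤ) * a') ^ 2 + ((p:ℤ) * b') ^ 2 + ((p:ℤ) * c') ^ 2
          = (p:ℤ)^2 * (a' ^ 2 + b' ^ 2 + c' ^ 2) := by ring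
      rw [hSS]
      have h4 : 4 ≤ (p:ℤ)^2 := by nlinarith
      have : a' ^ 2 + b' ^ 2 + c' ^ 2 < (p:ℤ)^2 * (a' ^ 2 + b' ^ 2 + c' ^ 2) := by
        have := mul_lt_mul_of_pos_right (by linarith : (1:ℤ) < (p:ℤ)^2) hS'pos
        linarith [this]
      exact (Int.toNat_lt_toNat (by positivity)).2 this
    obtain ⟨a₂, b₂, c₂, a₃, b₃, c₃, e1, e2, e3, e4, e5⟩ := ih _ hlt a' b' c' d' rfl h'
    exact ⟨p * a₂, p * b₂, p * c₂, p * a₃, p * b₃, p * c₃,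
      by linear_combination (p:ℤ)^2 * e1, by linear_combination (p:ℤ)^2 * e2,
      by linear_combination (p:ℤ)^2 * e3, by linear_combination (p:ℤ)^2 * e4,
      by linear_combination (p:ℤ)^2 * e5⟩
  · push_neg at hex
    have hprim : ∀ p : ℕ, p.Prime → (p : ℤ) ∣ a → (p : ℤ) ∣ b → (p : ℤ) ∣ c → False := by
      intro p hpp h1 h2 h3
      exact hex p hpp h1 h2 h3
    have habs : a ^ 2 + b ^ 2 + c ^ 2 = |d| ^ 2 := by rw [sq_abs]; exact h
    rcases Int.even_or_odd a with hA | hA <;> rcases Int.even_or_odd b with hB | hB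
    · exact good_primitive a b c |d| habs (abs_nonneg d) hprim hA hB
    · rcases Int.even_or_odd c with hC | hC
      · refine good_swap23 (good_primitive a c b |d| (by rw [sq_abs]; linarith)
          (abs_nonneg d) (fun p hp h1 h2 h3 => hprim p hp h1 h3 h2) hA hC)
      · exact absurd h (fun h => not_two_odd hB hC (by linarith : b ^ 2 + c ^ 2 + a ^ 2 = d ^ 2))
    · rcases Int.even_or_odd c with hC | hC
      · refine good_swap13 (good_primitive c b a |d| (by rw [sq_abs]; linarith)
          (abs_nonneg d) (fun p hp h1 h2 h3 => hprim p hp h3 h2 h1) hC hB)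
      · exact absurd h (fun h => not_two_odd hA hC (by linarith : a ^ 2 + c ^ 2 + b ^ 2 = d ^ 2))
    · exact absurd h (fun h => not_two_odd hA hB h)


/-- A nonzero v ∈ ℤ³ extends to three pairwise orthogonal integer vectors
of the same length iff |v| is an integer. -/
theorem stmt_4 (v : Fin 3 → ℤ) (hv : v ≠ 0) :
    (∃ v₂ v₃ : Fin 3 → ℤ,
        (∑ i, v i * v₂ i = 0) ∧ (∑ i, v i * v₃ i = 0) ∧ (∑ i, v₂ i * v₃ i = 0) ∧
        (∑ i, (v₂ i) ^ 2 = ∑ i, (v i) ^ 2) ∧ (∑ i, (v₃ i) ^ 2 = ∑ i, (v i) ^ 2)) ↔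
      ∃ l : ℤ, l ^ 2 = ∑ i, (v i) ^ 2 := by
  constructor
  · rintro ⟨v₂, v₃, h1, h2, h3, h4, h5⟩
    simp only [Fin.sum_univ_three] at h1 h2 h3 h4 h5 ⊢
    set a := v 0; set b := v 1; set c := v 2
    set a₂ := v₂ 0; set b₂ := v₂ 1; set c₂ := v₂ 2
    set a₃ := v₃ 0; set b₃ := v₃ 1; set c₃ := v₃ 2
    set N : ℤ := a ^ 2 + b ^ 2 + c ^ 2 with hNdef
    set D : ℤ := a * (b₂ * c₃ - c₂ * b₃) - b * (a₂ * c₃ - c₂ * a₃) + c * (a₂ * b₃ - b₂ * a₃)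
      with hDdef
    have key : D ^ 2 = (a ^ 2 + b ^ 2 + c ^ 2) * (a₂ ^ 2 + b₂ ^ 2 + c₂ ^ 2) *
        (a₃ ^ 2 + b₃ ^ 2 + c₃ ^ 2)
        + 2 * (a * a₂ + b * b₂ + c * c₂) * (a * a₃ + b * b₃ + c * c₃) *
          (a₂ * a₃ + b₂ * b₃ + c₂ * c₃)
        - (a ^ 2 + b ^ 2 + c ^ 2) * (a₂ * a₃ + b₂ * b₃ + c₂ * c₃) ^ 2
        - (a₂ ^ 2 + b₂ ^ 2 + c₂ ^ 2) * (a * a₃ + b * b₃ + c * c₃) ^ 2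
        - (a₃ ^ 2 + b₃ ^ 2 + c₃ ^ 2) * (a * a₂ + b * b₂ + c * c₂) ^ 2 := by
      rw [hDdef]; ring
    rw [h1, h2, h3, h4, h5] at key
    have key2 : D ^ 2 = N ^ 3 := by rw [key]; ring
    rcases eq_or_ne N 0 with hN0 | hN0
    · exact ⟨0, by simp [hN0]⟩
    · have hNpos : 0 < N := by
        rcases (lt_or_gt_of_ne hN0) with h' | h'
        · nlinarith [sq_nonneg a, sq_nonneg b, sq_nonneg c]
        · exact h'
      have hdvd : N ^ 2 ∣ D ^ 2 := ⟨N, by rw [key2]; ring⟩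
      have hND : N ∣ D := (Int.pow_dvd_pow_iff two_ne_zero).1 hdvd
      obtain ⟨k, hk⟩ := hND
      refine ⟨k, ?_⟩
      have hk2 : k ^ 2 = N := by
        have hNN : N ^ 2 ≠ 0 := by positivity
        apply mul_left_cancel₀ hNN
        rw [show N ^ 2 * k ^ 2 = (N * k) ^ 2 by ring, ← hk, key2]; ring
      rw [hk2]
  · rintro ⟨l, hl⟩
    simp only [Fin.sum_univ_three] at hl ⊢
    obtain ⟨a₂, b₂, c₂, a₃, b₃, c₃, e1, e2, e3, e4, e5⟩ :=
      good_of_eq_sq _ (v 0) (v 1) (v 2) l rfl hl.symm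
    exact ⟨![a₂, b₂, c₂], ![a₃, b₃, c₃], by simpa using e1, by simpa using e2,
      by simpa using e3, by simpa using e4, by simpa using e5⟩
end

section
/- Let v₁, ..., v_{n−1} be pairwise orthogonal vectors in ℤ^n, each of the same length l, where n is even or l is an integer. Then there exists v_n ∈ ℤ^n orthogonal to all v_i with |v_n| = l. -/
open Matrix Finset

section Aux1
set_option linter.unusedSectionVars false
variable {R : Type*} [CommRing R] {m : ℕ}

/-- The square matrix with rows `v 0, ..., v (m-1), x`. -/
private def Bmat (v : Fin m → Fin (m+1) → R) (x : Fin (m+1) → R) :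
    Matrix (Fin (m+1)) (Fin (m+1)) R := Fin.snoc v x

private lemma Bmat_castSucc (v : Fin m → Fin (m+1) → R) (x : Fin (m+1) → R) (i : Fin m) :
    Bmat v x i.castSucc = v i := by
  simp [Bmat]

private lemma Bmat_last (v : Fin m → Fin (m+1) → R) (x : Fin (m+1) → R) :
    Bmat v x (Fin.last m) = x := by
  simp [Bmat]

/-- The generalized cross product (cofactor vector). -/
private def wv (v : Fin m → Fin (m+1) → R) : Fin (m+1) → R :=
  fun k => (Bmat v (Pi.single k 1)).det

private lemma Bmat_eq_updateRow (v : Fin m → Fin (m+1) → R) (x y : Fin (m+1) → R) :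
    Bmat v x = (Bmat v y).updateRow (Fin.last m) x := by
  ext i k
  by_cases h : i = Fin.last m
  · subst h; simp [Bmat_last]
  · rw [Matrix.updateRow_ne h]
    rcases Fin.exists_castSucc_eq.mpr h with ⟨j, rfl⟩
    simp [Bmat_castSucc]

private lemma det_updateRow_sum'' {α : Type*} (M : Matrix (Fin (m+1)) (Fin (m+1)) R)
    (j : Fin (m+1)) (t : Finset α) (g : α → Fin (m+1) → R) :
    (M.updateRow j (∑ a ∈ t, g a)).det = ∑ a ∈ t, (M.updateRow j (g a)).det := by
  classical
  induction t using Finset.induction_on with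
  | empty =>
      simp only [Finset.sum_empty]
      have h := Matrix.det_updateRow_smul M j (0 : R) (0 : Fin (m+1) → R)
      simpa using h
  | insert _ _ h ih =>
      rw [Finset.sum_insert h, Matrix.det_updateRow_add, ih, Finset.sum_insert h]

private lemma det_Bmat (v : Fin m → Fin (m+1) → R) (x : Fin (m+1) → R) :
    (Bmat v x).det = ∑ k, x k * wv v k := by
  have hx : x = ∑ k, x k • (Pi.single k 1 : Fin (m+1) → R) := by
    ext j
    simp [Pi.single_apply, mul_comm]
  conv_lhs => rw [Bmat_eq_updateRow v x 0, hx]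
  rw [det_updateRow_sum'']
  refine Finset.sum_congr rfl fun k _ => ?_
  rw [Matrix.det_updateRow_smul, ← Bmat_eq_updateRow]
  rfl

private lemma wv_orth (v : Fin m → Fin (m+1) → R) (i : Fin m) :
    ∑ k, v i k * wv v k = 0 := by
  rw [← det_Bmat]
  exact Matrix.det_zero_of_row_eq (Fin.castSucc_lt_last i).ne
    (by rw [Bmat_castSucc, Bmat_last])

private lemma Bmat_mul_transpose (v : Fin m → Fin (m+1) → R) (x : Fin (m+1) → R) (L : R)
    (horth : ∀ i j, i ≠ j → ∑ k, v i k * v j k = 0)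
    (hnorm : ∀ i, ∑ k, (v i k) ^ 2 = L)
    (hx : ∀ i, ∑ k, v i k * x k = 0) :
    Bmat v x * (Bmat v x)ᵀ
      = Matrix.diagonal (Fin.snoc (fun _ => L) (∑ k, x k ^ 2)) := by
  ext i j
  rw [Matrix.mul_apply]
  simp only [Matrix.transpose_apply]
  induction i using Fin.lastCases with
  | last =>
    induction j using Fin.lastCases with
    | last => simp [Bmat_last, Matrix.diagonal_apply_eq, sq]
    | cast j =>
      have := hx j
      simp only [Bmat_last, Bmat_castSucc]
      rw [Matrix.diagonal_apply_ne _ (by simp [Fin.ext_iff]; omega)]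
      rw [← this]; exact Finset.sum_congr rfl fun k _ => mul_comm _ _
  | cast i =>
    induction j using Fin.lastCases with
    | last =>
      simp only [Bmat_last, Bmat_castSucc]
      rw [Matrix.diagonal_apply_ne _ (by simp [Fin.ext_iff]; omega)]
      exact hx i
    | cast j =>
      simp only [Bmat_castSucc]
      by_cases h : i = j
      · subst h
        rw [Matrix.diagonal_apply_eq]
        simp only [Fin.snoc_castSucc]
        rw [← hnorm i]; exact Finset.sum_congr rfl fun k _ => (sq _).symm
      · rw [Matrix.diagonal_apply_ne _
          (by simpa [Fin.ext_iff] using (Fin.castSucc_injective m).ne h)]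
        exact horth i j h

private lemma det_Bmat_sq (v : Fin m → Fin (m+1) → R) (x : Fin (m+1) → R) (L : R)
    (horth : ∀ i j, i ≠ j → ∑ k, v i k * v j k = 0)
    (hnorm : ∀ i, ∑ k, (v i k) ^ 2 = L)
    (hx : ∀ i, ∑ k, v i k * x k = 0) :
    ((Bmat v x).det) ^ 2 = L ^ m * ∑ k, x k ^ 2 := by
  have h := congrArg Matrix.det (Bmat_mul_transpose v x L horth hnorm hx)
  rw [Matrix.det_mul, Matrix.det_transpose, Matrix.det_diagonal] at h
  rw [Fin.prod_univ_castSucc] at h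
  simp only [Fin.snoc_castSucc, Fin.snoc_last, Finset.prod_const, Finset.card_univ,
    Fintype.card_fin] at h
  rw [sq, h]

private lemma Bmat_map {S : Type*} [CommRing S] (f : R →+* S)
    (v : Fin m → Fin (m+1) → R) (x : Fin (m+1) → R) :
    f.mapMatrix (Bmat v x) = Bmat (fun i k => f (v i k)) (fun k => f (x k)) := by
  ext i k
  induction i using Fin.lastCases with
  | last => simp [Bmat_last, RingHom.mapMatrix_apply, Matrix.map_apply]
  | cast i => simp [Bmat_castSucc, RingHom.mapMatrix_apply, Matrix.map_apply]

private lemma wv_map {S : Type*} [CommRing S] (f : R →+* S)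
    (v : Fin m → Fin (m+1) → R) (k : Fin (m+1)) :
    f (wv v k) = wv (fun i j => f (v i j)) k := by
  unfold wv
  have h : (fun j => f ((Pi.single k 1 : Fin (m+1) → R) j))
      = (Pi.single k 1 : Fin (m+1) → S) := by
    funext j
    simp [Pi.single_apply, apply_ite f]
  rw [RingHom.map_det, Bmat_map, h]

end Aux1
section Aux2
variable {m : ℕ}

private lemma wv_normQ (v : Fin m → Fin (m+1) → ℚ) (L : ℚ)
    (horth : ∀ i j, i ≠ j → ∑ k, v i k * v j k = 0)
    (hnorm : ∀ i, ∑ k, (v i k) ^ 2 = L) (hL : L ≠ 0) :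
    ∑ k, (wv v k) ^ 2 = L ^ m := by
  have hdet0 : (Bmat v 0).det = 0 := by
    rw [det_Bmat]; simp
  obtain ⟨x, hx0, hxv⟩ := Matrix.exists_mulVec_eq_zero_iff.mpr hdet0
  have hxorth : ∀ i, ∑ k, v i k * x k = 0 := by
    intro i
    have h := congrFun hxv i.castSucc
    simpa [Matrix.mulVec, dotProduct, Bmat_castSucc] using h
  have hxsq : ∑ k, x k ^ 2 ≠ 0 := by
    intro h
    apply hx0
    funext k
    have h2 := (Finset.sum_eq_zero_iff_of_nonneg
      (fun k _ => sq_nonneg (x k))).mp h k (Finset.mem_univ k)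
    exact pow_eq_zero_iff two_ne_zero |>.mp h2
  have hdx2 : (∑ k, x k * wv v k) ^ 2 = L ^ m * ∑ k, x k ^ 2 := by
    rw [← det_Bmat]; exact det_Bmat_sq v x L horth hnorm hxorth
  have hwne : ∑ k, (wv v k) ^ 2 ≠ 0 := by
    intro h
    have hz : ∀ k, wv v k = 0 := by
      intro k
      have h2 := (Finset.sum_eq_zero_iff_of_nonneg
        (fun k _ => sq_nonneg (wv v k))).mp h k (Finset.mem_univ k)
      exact pow_eq_zero_iff two_ne_zero |>.mp h2
    rw [Finset.sum_eq_zero (fun k _ => by rw [hz k, mul_zero])] at hdx2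
    have h0 : L ^ m * ∑ k, x k ^ 2 = 0 := by rw [← hdx2]; norm_num
    exact (mul_ne_zero (pow_ne_zero m hL) hxsq) h0
  have hNN : (∑ k, (wv v k) ^ 2) ^ 2 = L ^ m * ∑ k, (wv v k) ^ 2 := by
    have h1 : (Bmat v (wv v)).det = ∑ k, (wv v k) ^ 2 := by
      rw [det_Bmat]; exact Finset.sum_congr rfl fun k _ => (sq _).symm
    have h2 := det_Bmat_sq v (wv v) L horth hnorm (wv_orth v)
    rw [h1] at h2; exact h2
  have hNN' : (∑ k, (wv v k) ^ 2) * (∑ k, (wv v k) ^ 2)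
      = L ^ m * (∑ k, (wv v k) ^ 2) := by rw [← sq]; exact hNN
  exact mul_right_cancel₀ hwne hNN'

private lemma wv_mul_wv (hm : 1 ≤ m) (v : Fin m → Fin (m+1) → ℚ) (L : ℚ)
    (horth : ∀ i j, i ≠ j → ∑ k, v i k * v j k = 0)
    (hnorm : ∀ i, ∑ k, (v i k) ^ 2 = L) (hL : L ≠ 0) (k j : Fin (m+1)) :
    wv v k * wv v j
      = L ^ (m-1) * (L * (if k = j then 1 else 0) - ∑ i, v i k * v i j) := by
  set w := wv v with hw
  have hN : ∑ k, w k ^ 2 = L ^ m := wv_normQ v L horth hnorm hL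
  have hpow : L ^ (m-1) * L = L ^ m := by
    rw [← pow_succ]; congr 1; omega
  set c := L ^ (m-1) with hc
  set Mq : Matrix (Fin (m+1)) (Fin (m+1)) ℚ := Matrix.of fun k j =>
    w k * w j + c * (∑ i, v i k * v i j) - L ^ m * (if k = j then 1 else 0) with hMq
  have hBM : Bmat v w * Mq = 0 := by
    ext i k'
    rw [Matrix.mul_apply, Matrix.zero_apply]
    have expand : ∀ (a : Fin (m+1) → ℚ),
        ∑ j, a j * Mq j k'
          = (∑ j, a j * (w j * w k'))
            + c * (∑ t, (∑ j, a j * v t j) * v t k')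
            - (∑ j, a j * (L ^ m * (if j = k' then 1 else 0))) := by
      intro a
      have e2 : ∑ j, a j * (c * ∑ t, v t j * v t k')
          = c * ∑ t, (∑ j, a j * v t j) * v t k' := by
        calc ∑ j, a j * (c * ∑ t, v t j * v t k')
            = ∑ j, ∑ t, c * (a j * v t j * v t k') := by
              refine Finset.sum_congr rfl fun j _ => ?_
              rw [Finset.mul_sum, Finset.mul_sum]
              exact Finset.sum_congr rfl fun t _ => by ring
          _ = ∑ t, ∑ j, c * (a j * v t j * v t k') := Finset.sum_comm
          _ = c * ∑ t, (∑ j, a j * v t j) * v t k' := by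
              rw [Finset.mul_sum]
              refine Finset.sum_congr rfl fun t _ => ?_
              rw [Finset.sum_mul, Finset.mul_sum]
      rw [← e2, ← Finset.sum_add_distrib, ← Finset.sum_sub_distrib]
      exact Finset.sum_congr rfl fun j _ => by simp only [hMq, Matrix.of_apply]; ring
    induction i using Fin.lastCases with
    | last =>
      rw [Bmat_last, expand w]
      have e1 : ∑ j, w j * (w j * w k') = L ^ m * w k' := by
        have h1 : ∑ j, w j * (w j * w k') = (∑ j, w j * w j) * w k' := by
          rw [Finset.sum_mul]; exact Finset.sum_congr rfl fun j _ => (mul_assoc _ _ _).symm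
        have h2 : ∑ j, w j * w j = L ^ m := by
          rw [← hN]; exact Finset.sum_congr rfl fun j _ => (sq _).symm
        rw [h1, h2]
      have e2 : ∀ t, ∑ j, w j * v t j = 0 := by
        intro t
        rw [← wv_orth v t]
        exact Finset.sum_congr rfl fun j _ => mul_comm _ _
      have e3 : ∑ j, w j * (L ^ m * (if j = k' then 1 else 0)) = L ^ m * w k' := by
        simp [mul_ite, mul_comm]
      rw [e1, e3]
      rw [Finset.sum_eq_zero (fun t _ => by rw [e2 t, zero_mul])]
      ring
    | cast i₀ =>
      rw [Bmat_castSucc, expand (v i₀)]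
      have e1 : ∑ j, v i₀ j * (w j * w k') = 0 := by
        rw [show ∑ j, v i₀ j * (w j * w k') = (∑ j, v i₀ j * w j) * w k' by
          rw [Finset.sum_mul]; exact Finset.sum_congr rfl fun j _ => (mul_assoc _ _ _).symm]
        rw [wv_orth v i₀, zero_mul]
      have e2 : ∑ t, (∑ j, v i₀ j * v t j) * v t k' = L * v i₀ k' := by
        rw [Finset.sum_eq_single i₀]
        · rw [show ∑ j, v i₀ j * v i₀ j = L by
            rw [← hnorm i₀]; exact Finset.sum_congr rfl fun j _ => (sq _).symm]
        · intro t _ ht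
          rw [horth i₀ t (Ne.symm ht), zero_mul]
        · intro h; exact absurd (Finset.mem_univ i₀) h
      have e3 : ∑ j, v i₀ j * (L ^ m * (if j = k' then 1 else 0)) = L ^ m * v i₀ k' := by
        simp [mul_ite, mul_comm]
      rw [e1, e2, e3]
      rw [show c * (L * v i₀ k') = L ^ m * v i₀ k' by rw [← mul_assoc, hpow]]
      ring
  have hdetw : (Bmat v w).det = L ^ m := by
    rw [det_Bmat, ← hN]
    exact Finset.sum_congr rfl fun k _ => (sq _).symm
  have hU : IsUnit (Bmat v w).det := by
    rw [hdetw]; exact (pow_ne_zero m hL).isUnit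
  have hM0 : Mq = 0 := by
    calc Mq = ((Bmat v w)⁻¹ * Bmat v w) * Mq := by
          rw [Matrix.nonsing_inv_mul _ hU, Matrix.one_mul]
      _ = (Bmat v w)⁻¹ * (Bmat v w * Mq) := by rw [Matrix.mul_assoc]
      _ = 0 := by rw [hBM, Matrix.mul_zero]
  have := congrFun (congrFun hM0 k) j
  simp only [hMq, Matrix.of_apply, Matrix.zero_apply] at this
  rw [sub_eq_zero] at this
  rw [mul_sub, ← mul_assoc, hpow]
  linarith [this]

end Aux2

/-- Given m pairwise orthogonal vectors in ℤ^(m+1), all of the same squared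
length L > 0, with m+1 even or √L an integer, there is a further integer
vector orthogonal to all of them of the same squared length L. -/
theorem stmt_6 (m : ℕ) (v : Fin m → Fin (m + 1) → ℤ) (L : ℤ)
    (horth : ∀ i j, i ≠ j → ∑ k, v i k * v j k = 0)
    (hnorm : ∀ i, ∑ k, (v i k) ^ 2 = L) (hL : 0 < L)
    (hcase : Even (m + 1) ∨ ∃ l : ℤ, l ^ 2 = L) :
    ∃ w : Fin (m + 1) → ℤ, (∀ i, ∑ k, v i k * w k = 0) ∧ ∑ k, (w k) ^ 2 = L := by
  rcases Nat.eq_zero_or_pos m with hm0 | hm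
  · subst hm0
    obtain ⟨l, hl⟩ := hcase.resolve_left (by decide)
    exact ⟨fun _ => l, fun i => i.elim0, by simpa using hl⟩
  have hm : 1 ≤ m := hm
  set vq : Fin m → Fin (m+1) → ℚ := fun i k => (v i k : ℚ) with hvq
  have horthq : ∀ i j, i ≠ j → ∑ k, vq i k * vq j k = 0 := fun i j hij => by
    simp only [hvq]
    exact_mod_cast horth i j hij
  have hnormq : ∀ i, ∑ k, (vq i k) ^ 2 = (L : ℚ) := fun i => by
    simp only [hvq]
    exact_mod_cast hnorm i
  have hLq : (L : ℚ) ≠ 0 := by exact_mod_cast hL.ne'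
  have hwcast : ∀ k, ((wv v k : ℤ) : ℚ) = wv vq k := fun k =>
    wv_map (Int.castRingHom ℚ) v k
  have hw2 : ∑ k, (wv v k) ^ 2 = L ^ m := by
    have hq := wv_normQ vq (L : ℚ) horthq hnormq hLq
    simp_rw [← hwcast] at hq
    exact_mod_cast hq
  have hkey : ∀ k, (wv v k) ^ 2 = L ^ (m-1) * (L - ∑ i, (v i k) ^ 2) := by
    intro k
    have hq := wv_mul_wv hm vq (L : ℚ) horthq hnormq hLq k k
    rw [if_pos rfl, mul_one] at hq
    simp_rw [← hwcast, ← sq] at hq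
    simp only [hvq] at hq
    exact_mod_cast hq
  obtain ⟨d, hd2, hdne⟩ : ∃ d : ℤ, d ^ 2 = L ^ (m-1) ∧ d ≠ 0 := by
    rcases hcase with he | ⟨l, hl⟩
    · obtain ⟨s, hs⟩ : ∃ s, m = 2*s + 1 := by
        rcases Nat.even_or_odd m with h | h
        · exact absurd h (Nat.even_add_one.mp he)
        · exact h
      refine ⟨L ^ s, ?_, pow_ne_zero s hL.ne'⟩
      rw [← pow_mul]; congr 1; omega
    · have hlne : l ≠ 0 := fun h => by rw [h] at hl; simp at hl; omega
      refine ⟨l ^ (m-1), ?_, pow_ne_zero _ hlne⟩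
      rw [← pow_mul, mul_comm, pow_mul, hl]
  have hdvd : ∀ k, d ∣ wv v k := by
    intro k
    have h2 : d ^ 2 ∣ (wv v k) ^ 2 := ⟨L - ∑ i, (v i k) ^ 2, by rw [hkey k, hd2]⟩
    exact (Int.pow_dvd_pow_iff two_ne_zero).mp h2
  choose u hu using fun k => (hdvd k)
  have hLm : L ^ m = L ^ (m-1) * L := by rw [← pow_succ]; congr 1; omega
  refine ⟨u, ?_, ?_⟩
  · intro i
    have h := wv_orth v i
    simp_rw [hu] at h
    have h2 : d * ∑ k, v i k * u k = 0 := by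
      rw [Finset.mul_sum, ← h]; exact Finset.sum_congr rfl fun k _ => by ring
    rcases mul_eq_zero.mp h2 with h3 | h3
    · exact absurd h3 hdne
    · exact h3
  · have h := hw2
    simp_rw [hu] at h
    have h2 : L ^ (m-1) * ∑ k, (u k) ^ 2 = L ^ (m-1) * L := by
      calc L ^ (m-1) * ∑ k, (u k) ^ 2 = ∑ k, (d * u k) ^ 2 := by
            rw [← hd2, Finset.mul_sum]; exact Finset.sum_congr rfl fun k _ => by ring
        _ = L ^ m := h
        _ = L ^ (m-1) * L := hLm
    exact mul_left_cancel₀ (pow_ne_zero _ hL.ne') h2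
end

section
/- Let v₁, ..., v_{n−1} ∈ ℤ^n be pairwise orthogonal, all of length l > 0. Write each v_j = (v'_j, x_j) with v'_j ∈ ℤ^{n−1}. Then the square of D := det(v'₁, ..., v'_{n−1}) lies in l^{2(n−2)}·ℤ, i.e., l^{2(n−2)} divides D². -/
/-- For m pairwise orthogonal vectors in ℤ^(m+1) of common squared length
L > 0, the square of the determinant of the matrix of their first m
coordinates is divisible by L^(m-1) (i.e. l^(2(n-2)) with n = m+1). -/
theorem stmt_7 (m : ℕ) (v : Fin m → Fin (m + 1) → ℤ) (L : ℤ)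
    (horth : ∀ i j, i ≠ j → ∑ k, v i k * v j k = 0)
    (hnorm : ∀ i, ∑ k, (v i k) ^ 2 = L) (hL : 0 < L) :
    L ^ (m - 1) ∣ (Matrix.det (fun i j : Fin m => v j (Fin.castSucc i))) ^ 2 := by
  rcases Nat.eq_zero_or_pos m with hm | hm
  · subst hm; simp
  set M : Matrix (Fin m) (Fin m) ℤ := Matrix.of fun i j => v j (Fin.castSucc i) with hM
  set x : Fin m → ℤ := fun i => v i (Fin.last m) with hx
  have key : M.transpose * M = (L • 1 : Matrix (Fin m) (Fin m) ℤ)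
      - Matrix.replicateCol Unit x * Matrix.replicateRow Unit x := by
    ext i j
    simp only [Matrix.mul_apply, Matrix.transpose_apply, hM, Matrix.of_apply,
      Matrix.sub_apply, Matrix.smul_apply, Matrix.one_apply, Matrix.replicateCol_apply,
      Matrix.replicateRow_apply, smul_eq_mul, Finset.univ_unique, Finset.sum_const,
      Finset.card_singleton, one_smul]
    rcases eq_or_ne i j with rfl | hij
    · have := hnorm i
      rw [Fin.sum_univ_castSucc] at this
      simp only [if_pos rfl, mul_one]
      have : ∑ k : Fin m, v i (Fin.castSucc k) ^ 2 = L - v i (Fin.last m) ^ 2 := by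
        omega
      simpa [sq] using this
    · have := horth i j hij
      rw [Fin.sum_univ_castSucc] at this
      simp only [if_neg hij, mul_zero, hx]
      omega
  have h2 : (M.det) ^ 2 = ((L • 1 : Matrix (Fin m) (Fin m) ℤ)
      - Matrix.replicateCol Unit x * Matrix.replicateRow Unit x).det := by
    rw [← key, Matrix.det_mul, Matrix.det_transpose, sq]
  have hL0 : (L : ℚ) ≠ 0 := by exact_mod_cast hL.ne'
  have hmap : ((L • 1 : Matrix (Fin m) (Fin m) ℤ)
      - Matrix.replicateCol Unit x * Matrix.replicateRow Unit x).map (Int.castRingHom ℚ)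
      = (L : ℚ) • (1 + Matrix.replicateCol Unit (fun i => -((x i : ℚ)) / L)
          * Matrix.replicateRow Unit (fun i => (x i : ℚ))) := by
    ext i j
    simp only [Matrix.map_apply, Matrix.sub_apply, Matrix.smul_apply, Matrix.one_apply,
      Matrix.mul_apply, Matrix.replicateCol_apply, Matrix.replicateRow_apply, Matrix.add_apply,
      Finset.univ_unique, Finset.sum_const, Finset.card_singleton, one_smul,
      smul_eq_mul, map_sub, map_mul, map_intCast, eq_intCast]
    split_ifs <;> push_cast <;> field_simp <;> ring
  have hQ : (((M.det) ^ 2 : ℤ) : ℚ)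
      = (L : ℚ) ^ (m - 1) * ((L : ℚ) - ∑ i, (x i : ℚ) ^ 2) := by
    rw [h2]
    rw [show ((((L • 1 : Matrix (Fin m) (Fin m) ℤ)
        - Matrix.replicateCol Unit x * Matrix.replicateRow Unit x).det : ℤ) : ℚ)
      = (((L • 1 : Matrix (Fin m) (Fin m) ℤ)
        - Matrix.replicateCol Unit x * Matrix.replicateRow Unit x).map (Int.castRingHom ℚ)).det from by
      rw [← RingHom.mapMatrix_apply]; exact RingHom.map_det (Int.castRingHom ℚ) _]
    rw [hmap, Matrix.det_smul, Matrix.det_one_add_replicateCol_mul_replicateRow]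
    have hLm : (L : ℚ) ^ m = (L : ℚ) ^ (m - 1) * L := by
      rw [← pow_succ, Nat.sub_add_cancel hm]
    rw [Fintype.card_fin, hLm]
    simp only [dotProduct, smul_eq_mul]
    have hsum : ∑ i : Fin m, (x i : ℚ) * (-(x i : ℚ) / L)
        = (-(∑ i : Fin m, (x i : ℚ) ^ 2)) / L := by
      rw [neg_div, Finset.sum_div, ← Finset.sum_neg_distrib]
      exact Finset.sum_congr rfl fun i _ => by ring
    rw [hsum]
    field_simp
    ring
  have hfin : (M.det) ^ 2 = L ^ (m - 1) * (L - ∑ i, (x i) ^ 2) := by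
    have := hQ
    push_cast at this
    exact_mod_cast this
  exact ⟨L - ∑ i, (x i) ^ 2, hfin⟩
end

section
/- Let v₁ ∈ ℤ^3 be nonzero with gcd of its coordinates equal to 1 and |v₁| = l ∈ ℤ. Let K be the kernel of the map ℤ^3 → ℤ, x ↦ (v₁, x), and let w₁, w₂ be a ℤ-basis of K. Then det(Gram(w₁, w₂)) = l². -/
set_option maxHeartbeats 1000000 in


/-- For primitive v ∈ ℤ³ with |v| = l ∈ ℤ, and w₁, w₂ a ℤ-basis of the
kernel of x ↦ (v,x), the Gram determinant of w₁, w₂ equals l². -/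
theorem stmt_8 (v : Fin 3 → ℤ) (hv : v ≠ 0)
    (hprim : Finset.univ.gcd v = 1)
    (l : ℤ) (hl : ∑ i, (v i) ^ 2 = l ^ 2)
    (w₁ w₂ : Fin 3 → ℤ)
    (hw₁ : ∑ i, v i * w₁ i = 0) (hw₂ : ∑ i, v i * w₂ i = 0)
    (hspan : ∀ x : Fin 3 → ℤ, (∑ i, v i * x i) = 0 → ∃ a b : ℤ, x = a • w₁ + b • w₂)
    (hindep : ∀ a b : ℤ, a • w₁ + b • w₂ = 0 → a = 0 ∧ b = 0) :
    (∑ i, w₁ i * w₁ i) * (∑ i, w₂ i * w₂ i) - (∑ i, w₁ i * w₂ i) ^ 2 = l ^ 2 := by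
  -- Step 1: Bezout vector u with ⟨v,u⟩ = 1
  obtain ⟨u, hu⟩ : ∃ u : Fin 3 → ℤ, v 0 * u 0 + v 1 * u 1 + v 2 * u 2 = 1 := by
    have h2 : Int.gcd (v 0) (Int.gcd (v 1) (v 2)) = 1 := by
      have := hprim
      rw [show (Finset.univ : Finset (Fin 3)) = {0, 1, 2} by decide] at this
      rw [Finset.gcd_insert, Finset.gcd_insert, Finset.gcd_singleton,
        ← Int.abs_eq_normalize, ← Int.coe_gcd, ← Int.coe_gcd] at this
      rw [show Int.gcd (v 1) |v 2| = Int.gcd (v 1) (v 2) by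
        unfold Int.gcd; rw [Int.natAbs_abs]] at this
      exact_mod_cast this
    obtain ⟨a, b, hab⟩ := Int.isCoprime_iff_gcd_eq_one.mpr h2
    have hg : (Int.gcd (v 1) (v 2) : ℤ)
        = v 1 * Int.gcdA (v 1) (v 2) + v 2 * Int.gcdB (v 1) (v 2) := Int.gcd_eq_gcd_ab _ _
    refine ⟨![a, b * Int.gcdA (v 1) (v 2), b * Int.gcdB (v 1) (v 2)], ?_⟩
    show v 0 * a + v 1 * (b * _) + v 2 * (b * _) = 1
    linear_combination hab - b * hg
  -- expand sums
  simp only [Fin.sum_univ_three] at hl hw₁ hw₂ ⊢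
  -- Step 2: decompose the standard basis vectors
  obtain ⟨a0, b0, hd0⟩ := hspan (fun i => (if i = 0 then 1 else 0) - v 0 * u i) (by
    simp only [Fin.sum_univ_three]
    norm_num [Fin.ext_iff]
    linear_combination (-(v 0)) * hu)
  obtain ⟨a1, b1, hd1⟩ := hspan (fun i => (if i = 1 then 1 else 0) - v 1 * u i) (by
    simp only [Fin.sum_univ_three]
    norm_num [Fin.ext_iff]
    linear_combination (-(v 1)) * hu)
  obtain ⟨a2, b2, hd2⟩ := hspan (fun i => (if i = 2 then 1 else 0) - v 2 * u i) (by
    simp only [Fin.sum_univ_three]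
    norm_num [Fin.ext_iff]
    linear_combination (-(v 2)) * hu)
  -- decompose v - l² u
  obtain ⟨av, bv, hdv⟩ := hspan (fun i => v i - l ^ 2 * u i) (by
    simp only [Fin.sum_univ_three]
    linear_combination hl - l ^ 2 * hu)
  have e00 := congrFun hd0 0; have e01 := congrFun hd0 1; have e02 := congrFun hd0 2
  have e10 := congrFun hd1 0; have e11 := congrFun hd1 1; have e12 := congrFun hd1 2
  have e20 := congrFun hd2 0; have e21 := congrFun hd2 1; have e22 := congrFun hd2 2
  have ev0 := congrFun hdv 0; have ev1 := congrFun hdv 1; have ev2 := congrFun hdv 2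
  simp only [Pi.add_apply, Pi.smul_apply, smul_eq_mul] at e00 e01 e02 e10 e11 e12 e20 e21 e22 ev0 ev1 ev2
  norm_num [Fin.ext_iff] at e00 e01 e02 e10 e11 e12 e20 e21 e22
  -- Step 3: det M is a unit
  have hMC : (!![u 0, w₁ 0, w₂ 0; u 1, w₁ 1, w₂ 1; u 2, w₁ 2, w₂ 2] : Matrix (Fin 3) (Fin 3) ℤ)
      * !![v 0, v 1, v 2; a0, a1, a2; b0, b1, b2] = 1 := by
    ext i j
    fin_cases i <;> fin_cases j <;>
      simp [Matrix.mul_apply, Fin.sum_univ_three, Matrix.one_apply] <;>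
      first
        | linear_combination -e00 | linear_combination -e01 | linear_combination -e02
        | linear_combination -e10 | linear_combination -e11 | linear_combination -e12
        | linear_combination -e20 | linear_combination -e21 | linear_combination -e22
  have hunit : IsUnit (!![u 0, w₁ 0, w₂ 0; u 1, w₁ 1, w₂ 1; u 2, w₁ 2, w₂ 2] :
      Matrix (Fin 3) (Fin 3) ℤ).det := Matrix.isUnit_det_of_right_inverse hMC
  have hE2 : (!![u 0, w₁ 0, w₂ 0; u 1, w₁ 1, w₂ 1; u 2, w₁ 2, w₂ 2] :
      Matrix (Fin 3) (Fin 3) ℤ).det ^ 2 = 1 := by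
    rcases Int.isUnit_iff.mp hunit with h | h <;> rw [h] <;> ring
  have hdet : (!![u 0, w₁ 0, w₂ 0; u 1, w₁ 1, w₂ 1; u 2, w₁ 2, w₂ 2] :
      Matrix (Fin 3) (Fin 3) ℤ).det = u 0 * (w₁ 1 * w₂ 2 - w₁ 2 * w₂ 1)
      - w₁ 0 * (u 1 * w₂ 2 - u 2 * w₂ 1) + w₂ 0 * (u 1 * w₁ 2 - u 2 * w₁ 1) := by
    simp [Matrix.det_fin_three]; ring
  rw [hdet] at hE2
  -- Step 4: positivity of l²
  have hl2 : l ^ 2 ≠ 0 := by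
    have hvi : v 0 ≠ 0 ∨ v 1 ≠ 0 ∨ v 2 ≠ 0 := by
      by_contra hcon
      push_neg at hcon
      exact hv (funext fun i => by fin_cases i <;> simp [hcon.1, hcon.2.1, hcon.2.2])
    have : 0 < l ^ 2 := by
      rcases hvi with h | h | h <;>
        nlinarith [mul_self_pos.mpr h, sq_nonneg (v 0), sq_nonneg (v 1), sq_nonneg (v 2)]
    exact ne_of_gt this
  -- Step 5: the determinant identities
  set E := u 0 * (w₁ 1 * w₂ 2 - w₁ 2 * w₂ 1)
      - w₁ 0 * (u 1 * w₂ 2 - u 2 * w₂ 1) + w₂ 0 * (u 1 * w₁ 2 - u 2 * w₁ 1) with hEdef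
  set D := v 0 * (w₁ 1 * w₂ 2 - w₁ 2 * w₂ 1)
      - w₁ 0 * (v 1 * w₂ 2 - v 2 * w₂ 1) + w₂ 0 * (v 1 * w₁ 2 - v 2 * w₁ 1) with hDdef
  have hD : D = l ^ 2 * E := by
    rw [hDdef, hEdef]
    linear_combination (w₁ 1 * w₂ 2 - w₁ 2 * w₂ 1) * ev0
      + (-(w₁ 0 * w₂ 2) + w₂ 0 * w₁ 2) * ev1
      + (w₁ 0 * w₂ 1 - w₂ 0 * w₁ 1) * ev2
  have hDsq : D ^ 2 = l ^ 2 * ((w₁ 0 * w₁ 0 + w₁ 1 * w₁ 1 + w₁ 2 * w₁ 2)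
      * (w₂ 0 * w₂ 0 + w₂ 1 * w₂ 1 + w₂ 2 * w₂ 2)
      - (w₁ 0 * w₂ 0 + w₁ 1 * w₂ 1 + w₁ 2 * w₂ 2) ^ 2) := by
    rw [hDdef]
    linear_combination ((w₁ 0 * w₁ 0 + w₁ 1 * w₁ 1 + w₁ 2 * w₁ 2)
        * (w₂ 0 * w₂ 0 + w₂ 1 * w₂ 1 + w₂ 2 * w₂ 2)
        - (w₁ 0 * w₂ 0 + w₁ 1 * w₂ 1 + w₁ 2 * w₂ 2) ^ 2) * hl
      + (-(v 0 * w₁ 0 + v 1 * w₁ 1 + v 2 * w₁ 2) * (w₂ 0 * w₂ 0 + w₂ 1 * w₂ 1 + w₂ 2 * w₂ 2)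
        + (v 0 * w₂ 0 + v 1 * w₂ 1 + v 2 * w₂ 2) * (w₁ 0 * w₂ 0 + w₁ 1 * w₂ 1 + w₁ 2 * w₂ 2)) * hw₁
      + ((v 0 * w₁ 0 + v 1 * w₁ 1 + v 2 * w₁ 2) * (w₁ 0 * w₂ 0 + w₁ 1 * w₂ 1 + w₁ 2 * w₂ 2)
        - (v 0 * w₂ 0 + v 1 * w₂ 1 + v 2 * w₂ 2) * (w₁ 0 * w₁ 0 + w₁ 1 * w₁ 1 + w₁ 2 * w₁ 2)) * hw₂
  apply mul_left_cancel₀ hl2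
  calc l ^ 2 * ((w₁ 0 * w₁ 0 + w₁ 1 * w₁ 1 + w₁ 2 * w₁ 2)
      * (w₂ 0 * w₂ 0 + w₂ 1 * w₂ 1 + w₂ 2 * w₂ 2)
      - (w₁ 0 * w₂ 0 + w₁ 1 * w₂ 1 + w₁ 2 * w₂ 2) ^ 2) = D ^ 2 := hDsq.symm
    _ = l ^ 2 * l ^ 2 * E ^ 2 := by rw [hD]; ring
    _ = l ^ 2 * l ^ 2 := by rw [hE2]; ring
end

section
/- Let v₁ = (1,1,1,1,1,1) ∈ ℤ⁶. There is no set of five pairwise orthogonal vectors in ℤ⁶ containing v₁, all of the same length √6. -/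
open Finset

private lemma sum3 (f : Fin 6 → ℤ) (x p q : Fin 6) (hxp : x ≠ p) (hxq : x ≠ q) (hpq : p ≠ q)
    (h0 : ∀ k, k ≠ x → k ≠ p → k ≠ q → f k = 0) :
    ∑ k, f k = f x + f p + f q := by
  rw [← Finset.sum_subset (Finset.subset_univ ({x, p, q} : Finset (Fin 6)))
      (fun k _ hk => by
        simp only [Finset.mem_insert, Finset.mem_singleton] at hk
        push_neg at hk
        exact h0 k hk.1 hk.2.1 hk.2.2)]
  rw [Finset.sum_insert (by simp [hxp, hxq]), Finset.sum_insert (by simp [hpq]),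
    Finset.sum_singleton]
  ring

private lemma parity (a b : Fin 6 → ℤ) (hsa : ∑ k, a k = 0) (hsb : ∑ k, b k = 0)
    (hna : ∑ k, a k ^ 2 = 6) (hnb : ∑ k, b k ^ 2 = 6) (hab : ∑ k, a k * b k = 0)
    (h2 : ∀ k, 2 ∣ a k + b k) : False := by
  set s : Fin 6 → ℤ := fun k => (a k + b k) / 2 with hsdef
  have hsk : ∀ k, a k + b k = 2 * s k := fun k => (Int.mul_ediv_cancel' (h2 k)).symm
  have hsum : ∑ k, s k = 0 := by
    have h1 : ∑ k, (a k + b k) = 0 := by rw [Finset.sum_add_distrib, hsa, hsb]; ring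
    have h2s : ∑ k, (a k + b k) = 2 * ∑ k, s k := by
      rw [Finset.mul_sum]; exact Finset.sum_congr rfl fun k _ => hsk k
    omega
  have hsq : ∑ k, s k ^ 2 = 3 := by
    have h1 : ∑ k, (a k + b k) ^ 2 = 12 := by
      have he : ∀ k ∈ univ, (a k + b k) ^ 2 = a k ^ 2 + (2 * (a k * b k) + b k ^ 2) :=
        fun k _ => by ring
      rw [Finset.sum_congr rfl he, Finset.sum_add_distrib, Finset.sum_add_distrib,
        ← Finset.mul_sum, hna, hnb, hab]
      ring
    have h2' : ∑ k, (a k + b k) ^ 2 = 4 * ∑ k, s k ^ 2 := by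
      rw [Finset.mul_sum]
      exact Finset.sum_congr rfl fun k _ => by rw [hsk k]; ring
    omega
  have hdvd : (2 : ℤ) ∣ ∑ k, (s k ^ 2 - s k) := by
    refine Finset.dvd_sum fun k _ => ?_
    have he : s k ^ 2 - s k = (s k - 1) * ((s k - 1) + 1) := by ring
    rcases Int.even_mul_succ_self (s k - 1) with ⟨m, hm⟩
    exact ⟨m, by omega⟩
  rw [Finset.sum_sub_distrib, hsq, hsum] at hdvd
  norm_num at hdvd

private def TB (u : Fin 6 → ℤ) (s : ℤ) (x p q : Fin 6) : Prop :=
  (s = 1 ∨ s = -1) ∧ x ≠ p ∧ x ≠ q ∧ p ≠ q ∧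
  u x = -2 * s ∧ u p = s ∧ u q = s ∧ ∀ k, k ≠ x → k ≠ p → k ≠ q → u k = 0

private lemma TB.swap {u : Fin 6 → ℤ} {s : ℤ} {x p q : Fin 6} (h : TB u s x p q) :
    TB u s x q p := by
  obtain ⟨hs, hxp, hxq, hpq, hx, hp, hq, h0⟩ := h
  exact ⟨hs, hxq, hxp, hpq.symm, hx, hq, hp, fun k h1 h2 h3 => h0 k h1 h3 h2⟩

private lemma TB.sum {u : Fin 6 → ℤ} {s : ℤ} {x p q : Fin 6} (h : TB u s x p q) :
    ∑ k, u k = 0 := by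
  obtain ⟨hs, hxp, hxq, hpq, hx, hp, hq, h0⟩ := h
  rw [sum3 u x p q hxp hxq hpq h0, hx, hp, hq]; ring

private lemma TB.norm {u : Fin 6 → ℤ} {s : ℤ} {x p q : Fin 6} (h : TB u s x p q) :
    ∑ k, u k ^ 2 = 6 := by
  obtain ⟨hs, hxp, hxq, hpq, hx, hp, hq, h0⟩ := h
  rw [sum3 (fun k => u k ^ 2) x p q hxp hxq hpq (fun k h1 h2 h3 => by
    show u k ^ 2 = 0; rw [h0 k h1 h2 h3]; ring)]
  show u x ^ 2 + u p ^ 2 + u q ^ 2 = 6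
  rw [hx, hp, hq]
  rcases hs with rfl | rfl <;> norm_num

private lemma TB.dot3 {u b : Fin 6 → ℤ} {s : ℤ} {x p q : Fin 6} (h : TB u s x p q) :
    ∑ k, u k * b k = u x * b x + u p * b p + u q * b q := by
  obtain ⟨hs, hxp, hxq, hpq, hx, hp, hq, h0⟩ := h
  exact sum3 (fun k => u k * b k) x p q hxp hxq hpq (fun k h1 h2 h3 => by
    show u k * b k = 0; rw [h0 k h1 h2 h3]; ring)

private lemma TB.vals {u : Fin 6 → ℤ} {s : ℤ} {x p q : Fin 6} (h : TB u s x p q)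
    (k : Fin 6) (h1 : k ≠ p) (h2 : k ≠ q) : u k = -2 * s ∨ u k = 0 := by
  obtain ⟨hs, hxp, hxq, hpq, hx, hp, hq, h0⟩ := h
  by_cases hk : k = x
  · left; rw [hk, hx]
  · right; exact h0 k hk h1 h2

private lemma TB.vals' {u : Fin 6 → ℤ} {s : ℤ} {x p q : Fin 6} (h : TB u s x p q)
    (k : Fin 6) : u k = -2 * s ∨ u k = s ∨ u k = 0 := by
  obtain ⟨hs, hxp, hxq, hpq, hx, hp, hq, h0⟩ := h
  by_cases hk : k = x
  · left; rw [hk, hx]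
  by_cases hk1 : k = p
  · right; left; rw [hk1, hp]
  by_cases hk2 : k = q
  · right; left; rw [hk2, hq]
  · right; right; exact h0 k hk hk1 hk2

private lemma no_share {a b : Fin 6 → ℤ} {sa sb : ℤ} {xa pa qa xb pb qb : Fin 6}
    (ha : TB a sa xa pa qa) (hb : TB b sb xb pb qb)
    (hab : ∑ k, a k * b k = 0) : pa ≠ pb := by
  intro hpp
  have hdot : a xa * b xa + a pa * b pa + a qa * b qa = 0 := by
    rw [← ha.dot3]; exact hab
  obtain ⟨hsa, hxpa, hxqa, hpqa, hax, hap, haq, ha0⟩ := ha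
  have hbpa : b pa = sb := by rw [hpp]; exact hb.2.2.2.2.2.1
  by_cases hqq : qa = qb
  · -- odd supports equal: parity contradiction
    refine parity a b (TB.sum ⟨hsa, hxpa, hxqa, hpqa, hax, hap, haq, ha0⟩)
      hb.sum (TB.norm ⟨hsa, hxpa, hxqa, hpqa, hax, hap, haq, ha0⟩) hb.norm hab ?_
    intro k
    have hsb := hb.1
    by_cases hk1 : k = pa
    · have h1 : a k = sa := by rw [hk1, hap]
      have h2 : b k = sb := by rw [hk1, hbpa]
      rcases hsa with rfl | rfl <;> rcases hsb with rfl | rfl <;> omega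
    by_cases hk2 : k = qa
    · have h1 : a k = sa := by rw [hk2, haq]
      have h2 : b k = sb := by rw [hk2]; rw [hqq]; exact hb.2.2.2.2.2.2.1
      rcases hsa with rfl | rfl <;> rcases hsb with rfl | rfl <;> omega
    · have h1 : a k = -2 * sa ∨ a k = 0 :=
        TB.vals ⟨hsa, hxpa, hxqa, hpqa, hax, hap, haq, ha0⟩ k hk1 hk2
      have h2 : b k = -2 * sb ∨ b k = 0 := hb.vals k (hpp ▸ hk1) (hqq ▸ hk2)
      rcases h1 with h1 | h1 <;> rcases h2 with h2 | h2 <;>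
        rcases hsa with rfl | rfl <;> rcases hsb with rfl | rfl <;> omega
  · -- single overlap: dot product is odd
    have hsb := hb.1
    have h1 : b xa = -2 * sb ∨ b xa = sb ∨ b xa = 0 := hb.vals' xa
    have h2 : b qa = -2 * sb ∨ b qa = 0 := hb.vals qa (hpp ▸ hpqa.symm) hqq
    rw [hax, hap, haq, hbpa] at hdot
    rcases hsa with rfl | rfl <;> rcases hsb with rfl | rfl <;>
      rcases h1 with h1 | h1 | h1 <;> rcases h2 with h2 | h2 <;> omega

private lemma x_avoid {a b : Fin 6 → ℤ} {sa sb : ℤ} {xa pa qa xb pb qb : Fin 6}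
    (ha : TB a sa xa pa qa) (hb : TB b sb xb pb qb)
    (hab : ∑ k, a k * b k = 0)
    (d1 : pa ≠ pb) (d2 : pa ≠ qb) (d3 : qa ≠ pb) (d4 : qa ≠ qb) : xa ≠ pb := by
  intro hxp
  have hdot : a xa * b xa + a pa * b pa + a qa * b qa = 0 := by
    rw [← ha.dot3]; exact hab
  obtain ⟨hsa, hxpa, hxqa, hpqa, hax, hap, haq, ha0⟩ := ha
  have hbx : b xa = sb := by rw [hxp]; exact hb.2.2.2.2.2.1
  have h1 : b pa = -2 * sb ∨ b pa = 0 := hb.vals pa d1 d2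
  have h2 : b qa = -2 * sb ∨ b qa = 0 := hb.vals qa d3 d4
  have hsb := hb.1
  rw [hax, hap, haq, hbx] at hdot
  rcases hsa with rfl | rfl <;> rcases hsb with rfl | rfl <;>
    rcases h1 with h1 | h1 <;> rcases h2 with h2 | h2 <;> omega

private lemma key3 {a b c : Fin 6 → ℤ} {sa sb sc : ℤ}
    {xa pa qa xb pb qb xc pc qc : Fin 6}
    (ha : TB a sa xa pa qa) (hb : TB b sb xb pb qb) (hc : TB c sc xc pc qc)
    (hab : ∑ k, a k * b k = 0) (hac : ∑ k, a k * c k = 0)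
    (hbc : ∑ k, b k * c k = 0) : False := by
  have d1 : pa ≠ pb := no_share ha hb hab
  have d2 : pa ≠ qb := no_share ha hb.swap hab
  have d3 : qa ≠ pb := no_share ha.swap hb hab
  have d4 : qa ≠ qb := no_share ha.swap hb.swap hab
  have d5 : pa ≠ pc := no_share ha hc hac
  have d6 : pa ≠ qc := no_share ha hc.swap hac
  have d7 : qa ≠ pc := no_share ha.swap hc hac
  have d8 : qa ≠ qc := no_share ha.swap hc.swap hac
  have d9 : pb ≠ pc := no_share hb hc hbc
  have d10 : pb ≠ qc := no_share hb hc.swap hbc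
  have d11 : qb ≠ pc := no_share hb.swap hc hbc
  have d12 : qb ≠ qc := no_share hb.swap hc.swap hbc
  have e1 : xa ≠ pb := x_avoid ha hb hab d1 d2 d3 d4
  have e2 : xa ≠ qb := x_avoid ha hb.swap hab d2 d1 d4 d3
  have e3 : xa ≠ pc := x_avoid ha hc hac d5 d6 d7 d8
  have e4 : xa ≠ qc := x_avoid ha hc.swap hac d6 d5 d8 d7
  have e5 : xa ≠ pa := ha.2.1
  have e6 : xa ≠ qa := ha.2.2.1
  have e7 : pa ≠ qa := ha.2.2.2.1
  have e8 : pb ≠ qb := hb.2.2.2.1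
  have e9 : pc ≠ qc := hc.2.2.2.1
  -- seven distinct elements of Fin 6
  have hcard : ({xa, pa, qa, pb, qb, pc, qc} : Finset (Fin 6)).card = 7 := by
    rw [Finset.card_insert_of_notMem (by
      simp only [Finset.mem_insert, Finset.mem_singleton]; push_neg
      exact ⟨e5, e6, e1, e2, e3, e4⟩)]
    rw [Finset.card_insert_of_notMem (by
      simp only [Finset.mem_insert, Finset.mem_singleton]; push_neg
      exact ⟨e7, d1, d2, d5, d6⟩)]
    rw [Finset.card_insert_of_notMem (by
      simp only [Finset.mem_insert, Finset.mem_singleton]; push_neg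
      exact ⟨d3, d4, d7, d8⟩)]
    rw [Finset.card_insert_of_notMem (by
      simp only [Finset.mem_insert, Finset.mem_singleton]; push_neg
      exact ⟨e8, d9, d10⟩)]
    rw [Finset.card_insert_of_notMem (by
      simp only [Finset.mem_insert, Finset.mem_singleton]; push_neg
      exact ⟨d11, d12⟩)]
    rw [Finset.card_insert_of_notMem (by
      simp only [Finset.mem_singleton]
      exact e9)]
    rw [Finset.card_singleton]
  have hle := Finset.card_le_univ ({xa, pa, qa, pb, qb, pc, qc} : Finset (Fin 6))
  rw [hcard] at hle
  simp [Finset.card_univ] at hle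

private lemma sq1 {z : ℤ} (h : z ^ 2 = 1) : z = 1 ∨ z = -1 := by
  have h2 : (z - 1) * (z + 1) = 0 := by linear_combination h
  rcases mul_eq_zero.mp h2 with h3 | h3
  · left; omega
  · right; omega

private lemma sq4_s15 {z : ℤ} (h : z ^ 2 = 4) : z = 2 ∨ z = -2 := by
  have h2 : (z - 2) * (z + 2) = 0 := by linear_combination h
  rcases mul_eq_zero.mp h2 with h3 | h3
  · left; omega
  · right; omega

private lemma entry_bound (u : Fin 6 → ℤ) (hn : ∑ k, u k ^ 2 = 6) (k : Fin 6) :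
    u k ^ 2 = 0 ∨ u k ^ 2 = 1 ∨ u k ^ 2 = 4 := by
  have h1 : u k ^ 2 ≤ 6 := by
    have h : u k ^ 2 ≤ ∑ i, u i ^ 2 :=
      Finset.single_le_sum (fun i _ => sq_nonneg (u i)) (Finset.mem_univ k)
    omega
  have h2 : -2 ≤ u k ∧ u k ≤ 2 := by constructor <;> nlinarith
  have h3 : u k = -2 ∨ u k = -1 ∨ u k = 0 ∨ u k = 1 ∨ u k = 2 := by omega
  rcases h3 with h | h | h | h | h <;> rw [h] <;> norm_num

private lemma classify (u : Fin 6 → ℤ) (hn : ∑ k, u k ^ 2 = 6) :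
    (∀ k, u k = 1 ∨ u k = -1) ∨
    (∃ x p q : Fin 6, x ≠ p ∧ x ≠ q ∧ p ≠ q ∧
      (u x = 2 ∨ u x = -2) ∧ (u p = 1 ∨ u p = -1) ∧ (u q = 1 ∨ u q = -1) ∧
      ∀ k, k ≠ x → k ≠ p → k ≠ q → u k = 0) := by
  classical
  set A := univ.filter (fun k : Fin 6 => u k ^ 2 = 1) with hA
  set B := univ.filter (fun k : Fin 6 => u k ^ 2 = 4) with hB
  have key : (6 : ℤ) = (A.card : ℤ) + 4 * (B.card : ℤ) := by
    calc (6 : ℤ) = ∑ k, u k ^ 2 := hn.symm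
    _ = ∑ k, ((if u k ^ 2 = 1 then (1 : ℤ) else 0) + (if u k ^ 2 = 4 then (4 : ℤ) else 0)) :=
        Finset.sum_congr rfl (fun k _ => by
          rcases entry_bound u hn k with h | h | h <;> rw [h] <;> norm_num)
    _ = (A.card : ℤ) + 4 * (B.card : ℤ) := by
        rw [Finset.sum_add_distrib, ← Finset.sum_filter, ← Finset.sum_filter, ← hA, ← hB]
        simp [Finset.sum_const, mul_comm]
  have hA6 : A.card ≤ 6 := by
    have := Finset.card_le_univ A; simpa using this
  have hB6 : B.card ≤ 6 := by
    have := Finset.card_le_univ B; simpa using this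
  have hcases : (A.card = 6 ∧ B.card = 0) ∨ (A.card = 2 ∧ B.card = 1) := by omega
  rcases hcases with ⟨hA6', _⟩ | ⟨hA2, hB1⟩
  · left
    have hAu : A = univ := Finset.eq_univ_of_card A (by simp [hA6'])
    intro k
    have hk : k ∈ A := hAu ▸ Finset.mem_univ k
    rw [hA, Finset.mem_filter] at hk
    exact sq1 hk.2
  · right
    obtain ⟨x, hxB⟩ := Finset.card_eq_one.mp hB1
    obtain ⟨p, q, hpq, hApq⟩ := Finset.card_eq_two.mp hA2
    have hx4 : u x ^ 2 = 4 := by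
      have : x ∈ B := hxB ▸ Finset.mem_singleton_self x
      rw [hB, Finset.mem_filter] at this; exact this.2
    have hp1 : u p ^ 2 = 1 := by
      have : p ∈ A := hApq ▸ Finset.mem_insert_self p {q}
      rw [hA, Finset.mem_filter] at this; exact this.2
    have hq1 : u q ^ 2 = 1 := by
      have : q ∈ A := hApq ▸ Finset.mem_insert_of_mem (Finset.mem_singleton_self q)
      rw [hA, Finset.mem_filter] at this; exact this.2
    refine ⟨x, p, q, ?_, ?_, hpq, sq4_s15 hx4, sq1 hp1, sq1 hq1, ?_⟩
    · intro h; rw [h] at hx4; omega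
    · intro h; rw [h] at hx4; omega
    · intro k hkx hkp hkq
      have hknA : k ∉ A := by rw [hApq]; simp [hkp, hkq]
      have hknB : k ∉ B := by rw [hxB]; simp [hkx]
      rw [hA, Finset.mem_filter] at hknA
      rw [hB, Finset.mem_filter] at hknB
      simp only [Finset.mem_univ, true_and] at hknA hknB
      rcases entry_bound u hn k with h | h | h
      · exact pow_eq_zero_iff (by norm_num) |>.mp h
      · exact absurd h hknA
      · exact absurd h hknB

private lemma toTB {u : Fin 6 → ℤ} (hs : ∑ k, u k = 0)
    (h : ∃ x p q : Fin 6, x ≠ p ∧ x ≠ q ∧ p ≠ q ∧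
      (u x = 2 ∨ u x = -2) ∧ (u p = 1 ∨ u p = -1) ∧ (u q = 1 ∨ u q = -1) ∧
      ∀ k, k ≠ x → k ≠ p → k ≠ q → u k = 0) :
    ∃ (s : ℤ) (x p q : Fin 6), TB u s x p q := by
  obtain ⟨x, p, q, hxp, hxq, hpq, hx, hp, hq, h0⟩ := h
  have hsum : u x + u p + u q = 0 := by
    rw [← sum3 u x p q hxp hxq hpq h0]; exact hs
  refine ⟨u p, x, p, q, hp, hxp, hxq, hpq, ?_, rfl, ?_, h0⟩
  · rcases hx with h | h <;> rcases hp with h' | h' <;> rcases hq with h'' | h'' <;> omega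
  · rcases hx with h | h <;> rcases hp with h' | h' <;> rcases hq with h'' | h'' <;> omega

private lemma twoA {a b : Fin 6 → ℤ} (hsa : ∑ k, a k = 0) (hsb : ∑ k, b k = 0)
    (hna : ∑ k, a k ^ 2 = 6) (hnb : ∑ k, b k ^ 2 = 6) (hab : ∑ k, a k * b k = 0)
    (hA : ∀ k, a k = 1 ∨ a k = -1) (hB : ∀ k, b k = 1 ∨ b k = -1) : False :=
  parity a b hsa hsb hna hnb hab
    (fun k => by rcases hA k with h | h <;> rcases hB k with h' | h' <;> omega)

/-- There is no family of five pairwise orthogonal vectors in ℤ⁶ containing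
(1,1,1,1,1,1), all of squared length 6. -/
theorem stmt_15 :
    ¬ ∃ v : Fin 5 → Fin 6 → ℤ, v 0 = (fun _ => 1) ∧
      (∀ i j, i ≠ j → ∑ k, v i k * v j k = 0) ∧
      (∀ i, ∑ k, (v i k) ^ 2 = 6) := by
  rintro ⟨v, hv0, horth, hnorm⟩
  have hsum : ∀ i : Fin 5, i ≠ 0 → ∑ k, v i k = 0 := by
    intro i hi
    have h := horth i 0 hi
    simpa [hv0] using h
  have hcl : ∀ i : Fin 5, i ≠ 0 →
      (∀ k, v i k = 1 ∨ v i k = -1) ∨ ∃ (s : ℤ) (x p q : Fin 6), TB (v i) s x p q := by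
    intro i hi
    rcases classify (v i) (hnorm i) with h | h
    · exact Or.inl h
    · exact Or.inr (toTB (hsum i hi) h)
  rcases hcl 1 (by decide) with h1 | h1 <;> rcases hcl 2 (by decide) with h2 | h2 <;>
    rcases hcl 3 (by decide) with h3 | h3 <;> rcases hcl 4 (by decide) with h4 | h4
  all_goals first
  | (exact twoA (hsum 1 (by decide)) (hsum 2 (by decide)) (hnorm 1) (hnorm 2)
      (horth 1 2 (by decide)) h1 h2)
  | (exact twoA (hsum 1 (by decide)) (hsum 3 (by decide)) (hnorm 1) (hnorm 3)
      (horth 1 3 (by decide)) h1 h3)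
  | (exact twoA (hsum 1 (by decide)) (hsum 4 (by decide)) (hnorm 1) (hnorm 4)
      (horth 1 4 (by decide)) h1 h4)
  | (exact twoA (hsum 2 (by decide)) (hsum 3 (by decide)) (hnorm 2) (hnorm 3)
      (horth 2 3 (by decide)) h2 h3)
  | (exact twoA (hsum 2 (by decide)) (hsum 4 (by decide)) (hnorm 2) (hnorm 4)
      (horth 2 4 (by decide)) h2 h4)
  | (exact twoA (hsum 3 (by decide)) (hsum 4 (by decide)) (hnorm 3) (hnorm 4)
      (horth 3 4 (by decide)) h3 h4)
  | (obtain ⟨s2, x2, p2, q2, t2⟩ := h2; obtain ⟨s3, x3, p3, q3, t3⟩ := h3;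
     obtain ⟨s4, x4, p4, q4, t4⟩ := h4;
     exact key3 t2 t3 t4 (horth 2 3 (by decide)) (horth 2 4 (by decide)) (horth 3 4 (by decide)))
  | (obtain ⟨s1, x1, p1, q1, t1⟩ := h1; obtain ⟨s3, x3, p3, q3, t3⟩ := h3;
     obtain ⟨s4, x4, p4, q4, t4⟩ := h4;
     exact key3 t1 t3 t4 (horth 1 3 (by decide)) (horth 1 4 (by decide)) (horth 3 4 (by decide)))
  | (obtain ⟨s1, x1, p1, q1, t1⟩ := h1; obtain ⟨s2, x2, p2, q2, t2⟩ := h2;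
     obtain ⟨s4, x4, p4, q4, t4⟩ := h4;
     exact key3 t1 t2 t4 (horth 1 2 (by decide)) (horth 1 4 (by decide)) (horth 2 4 (by decide)))
  | (obtain ⟨s1, x1, p1, q1, t1⟩ := h1; obtain ⟨s2, x2, p2, q2, t2⟩ := h2;
     obtain ⟨s3, x3, p3, q3, t3⟩ := h3;
     exact key3 t1 t2 t3 (horth 1 2 (by decide)) (horth 1 3 (by decide)) (horth 2 3 (by decide)))
end

section
/- Let a be a positive integer that is a sum of two squares, and let b, c, l be integers with ac − b² = l². If there exist integers u, y with u² + y² = a and a dividing ul − by, then x := (ul − by)/a and y satisfy ax² + 2bxy + cy² = l². -/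
/-- If a > 0 is a sum of two squares via u² + y² = a, ac − b² = l², and
a ∣ ul − by, then x := (ul − by)/a together with y solves
ax² + 2bxy + cy² = l². -/
theorem stmt_19 (a b c l u y : ℤ) (ha : 0 < a)
    (h : a * c - b ^ 2 = l ^ 2) (huy : u ^ 2 + y ^ 2 = a)
    (hdvd : a ∣ u * l - b * y) :
    a * ((u * l - b * y) / a) ^ 2 + 2 * b * ((u * l - b * y) / a) * y + c * y ^ 2 = l ^ 2 := by
  obtain ⟨x, hx⟩ := hdvd
  rw [hx, Int.mul_ediv_cancel_left _ ha.ne']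
  have hac : a * c = l ^ 2 + b ^ 2 := by linarith
  have key : a * (a * x ^ 2 + 2 * b * x * y + c * y ^ 2) = a * l ^ 2 := by
    have : (a * x) ^ 2 + 2 * b * (a * x) * y + (a * c) * y ^ 2 = a * l ^ 2 := by
      rw [← hx, hac, ← huy]; ring
    nlinarith [this]
  exact mul_left_cancel₀ ha.ne' key
end
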